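/- arXiv:math/0411072 — 2 statements merged into one kernel-verified Lean document; each statement's English description precedes it below -/
import Mathlib

section
/- For every natural number n ≥ 1, q(n) = Σ_{m∈ℤ} (−1)^m p(n − m(5m−1)/2), where the sum runs over all integers m (positive and negative), p(k) = 0 for k < 0, and only finitely many terms are nonzero. -/
namespace RR

/-- The `i`-th part (1-indexed) of a partition given as a list of parts;
`λ_i = 0` for `i` beyond the number of parts. -/
def part (l : List ℕ) (i : ℕ) : ℕ := l.getD (i - 1) 0

/-- `l` is a partition: a weakly decreasing list of positive integers. -/
def IsPartition (l : List ℕ) : Prop := l.Pairwise (· ≥ ·) ∧ ∀ x ∈ l, 0 < x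

/-- `l` is a partition of `n`. -/
def IsPartitionOf (n : ℕ) (l : List ℕ) : Prop := IsPartition l ∧ l.sum = n

/-- A Rogers-Ramanujan partition: the smallest part is at least the number of parts. -/
def IsRR (l : List ℕ) : Prop := ∀ x ∈ l, l.length ≤ x

/-- Height `s_m(λ)` of the first `m`-Durfee rectangle: the largest `h ≥ max(m,1)`
with `λ_h ≥ h - m`. -/
noncomputable def sD (m : ℕ) (l : List ℕ) : ℕ := sSup {h : ℕ | max m 1 ≤ h ∧ h - m ≤ part l h}

/-- Height `t_m(λ)` of the second `m`-Durfee rectangle: the largest `h ≥ max(m,1)`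
with `λ_{s+h} ≥ h - m`, where `s = s_m(λ)`. -/
noncomputable def tD (m : ℕ) (l : List ℕ) : ℕ :=
  sSup {h : ℕ | max m 1 ≤ h ∧ h - m ≤ part l (sD m l + h)}

/-- `γ′₁`: the number of indices `i ≥ 1` with `λ_{s+t+i} > 0`. -/
noncomputable def gamma1 (m : ℕ) (l : List ℕ) : ℕ :=
  {i : ℕ | 1 ≤ i ∧ 0 < part l (sD m l + tD m l + i)}.ncard

/-- The `(2,m)`-rank: `r_{2,m}(λ) = β₁ + α_{s-t-β₁+1} - γ′₁`, where
`β₁ = λ_{s+1} - (t - m)` and `α_i = λ_i - (s - m)`. -/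
noncomputable def rank2 (m : ℕ) (l : List ℕ) : ℤ :=
  let s := sD m l
  let t := tD m l
  let b1 := part l (s + 1) - (t - m)
  (b1 : ℤ) + ((part l (s - t - b1 + 1) : ℤ) - ((s - m : ℕ) : ℤ)) - (gamma1 m l : ℤ)

/-- `p n`: the number of partitions of `n`. -/
noncomputable def p (n : ℕ) : ℕ := {l : List ℕ | IsPartitionOf n l}.ncard

/-- `q n`: the number of Rogers-Ramanujan partitions of `n`. -/
noncomputable def q (n : ℕ) : ℕ := {l : List ℕ | IsPartitionOf n l ∧ IsRR l}.ncard

/-- The number of partitions of `n` whose `(2,m)`-rank satisfies the predicate `P`;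
for `m = 0` only non-Rogers-Ramanujan partitions are counted. -/
noncomputable def hC (n m : ℕ) (P : ℤ → Prop) : ℕ :=
  {l : List ℕ | IsPartitionOf n l ∧ (m = 0 → ¬ IsRR l) ∧ P (rank2 m l)}.ncard

/-- `p` extended to `ℤ` by `0` on negative integers. -/
noncomputable def pZ (k : ℤ) : ℤ := if 0 ≤ k then (p k.toNat : ℤ) else 0


/-! ### Basic facts -/

lemma length_le_sum (l : List ℕ) (h : ∀ x ∈ l, 0 < x) : l.length ≤ l.sum := by
  induction l with
  | nil => simp
  | cons a t ih =>
    simp only [List.length_cons, List.sum_cons]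
    have ha := h a (by simp)
    have := ih (fun x hx => h x (by simp [hx]))
    omega

lemma mul_length_le_sum (c : ℕ) (l : List ℕ) (h : ∀ x ∈ l, c ≤ x) : c * l.length ≤ l.sum := by
  induction l with
  | nil => simp
  | cons a t ih =>
    simp only [List.length_cons, List.sum_cons]
    have ha := h a (by simp)
    have := ih (fun x hx => h x (by simp [hx]))
    calc c * (t.length + 1) = c * t.length + c := by ring
    _ ≤ t.sum + a := by omega
    _ = a + t.sum := by omega

lemma part_le {n : ℕ} {l : List ℕ} (hl : IsPartitionOf n l) {x : ℕ} (hx : x ∈ l) : x ≤ n :=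
  hl.2 ▸ List.le_sum_of_mem hx

lemma finite_partitionOf (n : ℕ) : {l : List ℕ | IsPartitionOf n l}.Finite := by
  apply Set.Finite.subset (((List.finite_length_le (Fin (n+1)) n)).image
    (fun l => l.map Fin.val))
  intro l hl
  simp only [Set.mem_image, Set.mem_setOf_eq]
  refine ⟨l.attach.map (fun x => (⟨x.1, by
    have := part_le hl x.2
    omega⟩ : Fin (n+1))), ?_, ?_⟩
  · simp only [Set.mem_setOf_eq, List.length_map, List.length_attach]
    calc l.length ≤ l.sum := length_le_sum l hl.1.2
    _ = n := hl.2
  · rw [List.map_map]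
    calc l.attach.map _ = l.attach.map Subtype.val := rfl
    _ = l := l.attach_map_subtype_val

lemma partitionOf_zero : {l : List ℕ | IsPartitionOf 0 l} = {[]} := by
  ext l
  simp only [Set.mem_setOf_eq, Set.mem_singleton_iff]
  constructor
  · rintro ⟨⟨hs, hp⟩, h0⟩
    cases l with
    | nil => rfl
    | cons a t =>
      have := hp a (by simp)
      simp only [List.sum_cons] at h0
      omega
  · rintro rfl
    exact ⟨⟨List.Pairwise.nil, by simp⟩, rfl⟩

/-! ### Partitions with parts at most `k` -/

def PA (k n : ℕ) : Set (List ℕ) := {l | IsPartitionOf n l ∧ ∀ x ∈ l, x ≤ k}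
noncomputable def NA (k n : ℕ) : ℕ := (PA k n).ncard

lemma finite_PA (k n : ℕ) : (PA k n).Finite :=
  (finite_partitionOf n).subset (fun _ h => h.1)

lemma PA_stab {k n : ℕ} (h : n ≤ k) : PA k n = {l | IsPartitionOf n l} := by
  ext l
  exact ⟨fun hl => hl.1, fun hl => ⟨hl, fun x hx => (part_le hl hx).trans h⟩⟩

lemma NA_stab {k n : ℕ} (h : n ≤ k) : NA k n = p n := by
  rw [NA, PA_stab h, p]

lemma NA_zero_left (n : ℕ) : NA 0 n = if n = 0 then 1 else 0 := by
  rcases Nat.eq_zero_or_pos n with rfl | hn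
  · rw [if_pos rfl, NA, PA_stab (le_refl 0), partitionOf_zero, Set.ncard_singleton]
  · rw [if_neg (by omega), NA]
    convert Set.ncard_empty (List ℕ)
    ext l
    simp only [PA, Set.mem_setOf_eq, Set.mem_empty_iff_false, iff_false, not_and]
    intro hl hb
    cases l with
    | nil => exact absurd hl.2.symm (by simpa using hn.ne')
    | cons a t =>
      have h1 := hl.1.2 a (by simp)
      have h2 := hb a (by simp)
      omega

lemma PA_zero_right (k : ℕ) : PA k 0 = {[]} := by
  rw [PA]
  ext l
  simp only [Set.mem_setOf_eq, Set.mem_singleton_iff]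
  constructor
  · intro hl
    have h0 : l ∈ {l : List ℕ | IsPartitionOf 0 l} := hl.1
    rw [partitionOf_zero] at h0
    exact h0
  · rintro rfl
    exact ⟨⟨⟨List.Pairwise.nil, by simp⟩, rfl⟩, by simp⟩

lemma NA_zero_right (k : ℕ) : NA k 0 = 1 := by
  rw [NA, PA_zero_right, Set.ncard_singleton]

lemma PA_succ_high {k n : ℕ} (h : n ≤ k) : PA (k+1) n = PA k n := by
  ext l
  simp only [PA, Set.mem_setOf_eq]
  constructor
  · rintro ⟨hl, hb⟩
    exact ⟨hl, fun x hx => by have := part_le hl hx; omega⟩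
  · rintro ⟨hl, hb⟩
    exact ⟨hl, fun x hx => (hb x hx).trans (by omega)⟩

lemma NA_succ (k n : ℕ) :
    NA (k+1) n = NA k n + (if k+1 ≤ n then NA (k+1) (n-(k+1)) else 0) := by
  by_cases h : k+1 ≤ n
  · rw [if_pos h]
    have himg : PA (k+1) n = PA k n ∪ (fun t => (k+1) :: t) '' PA (k+1) (n-(k+1)) := by
      ext l
      simp only [PA, Set.mem_union, Set.mem_image, Set.mem_setOf_eq]
      constructor
      · rintro ⟨hl, hb⟩
        by_cases hkl : (k+1) ∈ l
        · right
          cases l with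
          | nil => simp at hkl
          | cons a t =>
            have hsc := List.pairwise_cons.mp hl.1.1
            have ha : a = k+1 := by
              rcases List.mem_cons.mp hkl with h1 | h1
              · omega
              · have := hsc.1 _ h1
                have := hb a (by simp)
                omega
            refine ⟨t, ⟨⟨⟨hsc.2, fun x hx => hl.1.2 x (by simp [hx])⟩, ?_⟩,
              fun x hx => hb x (by simp [hx])⟩, by rw [ha]⟩
            have hs := hl.2
            simp only [List.sum_cons] at hs
            omega
        · left
          exact ⟨hl, fun x hx => by
            have := hb x hx
            rcases Nat.lt_or_ge x (k+1) with h1 | h1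
            · omega
            · exact absurd (by omega : x = k + 1) (fun e => hkl (e ▸ hx))⟩
      · rintro (⟨hl, hb⟩ | ⟨t, ⟨⟨ht, hts⟩, htb⟩, rfl⟩)
        · exact ⟨hl, fun x hx => (hb x hx).trans (by omega)⟩
        · have hxle : ∀ x ∈ (k+1) :: t, x ≤ k + 1 := by
            intro x hx
            rcases List.mem_cons.mp hx with rfl | h1
            · omega
            · exact htb x h1
          refine ⟨⟨⟨List.pairwise_cons.mpr ⟨fun b hb' => htb b hb', ht.1⟩,
            fun x hx => ?_⟩, ?_⟩, hxle⟩
          · rcases List.mem_cons.mp hx with rfl | h1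
            · omega
            · exact ht.2 x h1
          · simp only [List.sum_cons, hts]
            omega
    have hdisj : Disjoint (PA k n) ((fun t => (k+1) :: t) '' PA (k+1) (n-(k+1))) := by
      rw [Set.disjoint_left]
      rintro l ⟨_, hb⟩ ⟨t, _, rfl⟩
      have := hb (k+1) (by simp)
      omega
    have hinj : Set.InjOn (fun t => (k+1) :: t) (PA (k+1) (n-(k+1))) := by
      intro a _ b _ hab
      simpa using hab
    rw [NA, himg, Set.ncard_union_eq hdisj (finite_PA _ _)
      ((finite_PA _ _).image _), Set.ncard_image_of_injOn hinj]
    rfl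
  · rw [if_neg h, add_zero, NA, NA, PA_succ_high (by omega)]

/-! ### Partitions with at most `k` parts -/

def PB (k n : ℕ) : Set (List ℕ) := {l | IsPartitionOf n l ∧ l.length ≤ k}
noncomputable def NB (k n : ℕ) : ℕ := (PB k n).ncard
def PE (c k n : ℕ) : Set (List ℕ) := {l | IsPartitionOf n l ∧ l.length = k ∧ ∀ x ∈ l, c ≤ x}

lemma finite_PB (k n : ℕ) : (PB k n).Finite :=
  (finite_partitionOf n).subset (fun _ h => h.1)

lemma finite_PE (c k n : ℕ) : (PE c k n).Finite :=
  (finite_partitionOf n).subset (fun _ h => h.1)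

lemma PE_empty {c k n : ℕ} (h : n < c * k) : PE c k n = ∅ := by
  ext l
  simp only [PE, Set.mem_setOf_eq, Set.mem_empty_iff_false, iff_false, not_and]
  intro hl hlen
  intro hb
  have := mul_length_le_sum c l hb
  rw [hlen, hl.2] at this
  omega

lemma sum_map_add_one (l : List ℕ) : (l.map (· + 1)).sum = l.sum + l.length := by
  induction l with
  | nil => simp
  | cons a t ih => simp [ih]; omega

lemma sum_map_sub_one (l : List ℕ) (h : ∀ x ∈ l, 1 ≤ x) :
    (l.map (· - 1)).sum = l.sum - l.length := by
  induction l with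
  | nil => simp
  | cons a t ih =>
    have ha := h a (by simp)
    have ht := ih (fun x hx => h x (by simp [hx]))
    have hlen := length_le_sum t (fun x hx => h x (by simp [hx]))
    simp only [List.map_cons, List.sum_cons, List.length_cons, ht]
    omega

lemma map_add_sub_one (l : List ℕ) (h : ∀ x ∈ l, 1 ≤ x) : (l.map (· - 1)).map (· + 1) = l := by
  rw [List.map_map]
  calc l.map ((· + 1) ∘ (· - 1)) = l.map id := by
        apply List.map_congr_left
        intro x hx
        have := h x hx
        simp only [Function.comp_apply, id_eq]
        omega
  _ = l := l.map_id

lemma map_sub_add_one (l : List ℕ) : (l.map (· + 1)).map (· - 1) = l := by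
  rw [List.map_map]
  calc l.map ((· - 1) ∘ (· + 1)) = l.map id := by
        apply List.map_congr_left
        intro x hx
        simp only [Function.comp_apply, id_eq]
        omega
  _ = l := l.map_id

lemma sorted_map_add_one {l : List ℕ} (h : l.Pairwise (· ≥ ·)) :
    (l.map (· + 1)).Pairwise (· ≥ ·) := by
  rw [List.pairwise_map]
  exact h.imp (fun hab => by omega)

lemma sorted_map_sub_one {l : List ℕ} (h : l.Pairwise (· ≥ ·)) :
    (l.map (· - 1)).Pairwise (· ≥ ·) := by
  rw [List.pairwise_map]
  exact h.imp (fun hab => by omega)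

/-- Peeling one unit off each of the `k` parts. -/
lemma ncard_PE_peel (c k n : ℕ) (hc : 1 ≤ c) :
    (PE (c+1) k (n + k)).ncard = (PE c k n).ncard := by
  have himg : (fun l : List ℕ => l.map (· - 1)) '' PE (c+1) k (n+k) = PE c k n := by
    ext l
    simp only [PE, Set.mem_image, Set.mem_setOf_eq]
    constructor
    · rintro ⟨t, ⟨⟨⟨hts, htp⟩, htsum⟩, htlen, htb⟩, rfl⟩
      have hone : ∀ x ∈ t, 1 ≤ x := fun x hx => htp x hx
      refine ⟨⟨⟨sorted_map_sub_one hts, ?_⟩, ?_⟩, ?_, ?_⟩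
      · intro x hx
        obtain ⟨y, hy, rfl⟩ := List.mem_map.mp hx
        have := htb y hy
        omega
      · rw [sum_map_sub_one t hone, htsum, htlen]
        omega
      · simp [htlen]
      · intro x hx
        obtain ⟨y, hy, rfl⟩ := List.mem_map.mp hx
        have := htb y hy
        omega
    · rintro ⟨⟨⟨hls, hlp⟩, hlsum⟩, hllen, hlb⟩
      refine ⟨l.map (· + 1), ⟨⟨⟨sorted_map_add_one hls, ?_⟩, ?_⟩, ?_, ?_⟩,
        map_sub_add_one l⟩
      · intro x hx
        obtain ⟨y, hy, rfl⟩ := List.mem_map.mp hx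
        omega
      · rw [sum_map_add_one, hlsum, hllen]
      · simp [hllen]
      · intro x hx
        obtain ⟨y, hy, rfl⟩ := List.mem_map.mp hx
        have := hlb y hy
        omega
  have hinj : Set.InjOn (fun l : List ℕ => l.map (· - 1)) (PE (c+1) k (n+k)) := by
    intro a ha b hb hab
    have h1 : ∀ x ∈ a, 1 ≤ x := fun x hx => ha.1.1.2 x hx
    have h2 : ∀ x ∈ b, 1 ≤ x := fun x hx => hb.1.1.2 x hx
    have := congrArg (fun l : List ℕ => l.map (· + 1)) hab
    simpa [map_add_sub_one a h1, map_add_sub_one b h2] using this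
  rw [← himg, Set.ncard_image_of_injOn hinj]

lemma ncard_PE_one (d k n : ℕ) :
    (PE (1+d) k (n + d*k)).ncard = (PE 1 k n).ncard := by
  induction d generalizing n with
  | zero => simp
  | succ d ih =>
    have harith : n + (d+1)*k = (n + d*k) + k := by ring
    have := ncard_PE_peel (1+d) k (n + d*k) (by omega)
    rw [harith, show 1+(d+1) = (1+d)+1 by omega, this, ih]

/-- Splitting off the trailing `1`s of a partition. -/
lemma split_ones : ∀ l : List ℕ, l.Pairwise (· ≥ ·) → (∀ x ∈ l, 1 ≤ x) →
    ∃ l₁ : List ℕ, l = l₁ ++ List.replicate (l.length - l₁.length) 1 ∧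
      (∀ x ∈ l₁, 2 ≤ x) ∧ l₁.length ≤ l.length := by
  intro l
  induction l with
  | nil => exact fun _ _ => ⟨[], by simp⟩
  | cons a t ih =>
    intro hs hp
    have hsc := List.pairwise_cons.mp hs
    by_cases ha : a ≤ 1
    · have ha1 : a = 1 := by have := hp a (by simp); omega
      refine ⟨[], ?_, by simp, by simp⟩
      simp only [List.nil_append, List.length_cons, Nat.sub_zero, List.length_nil]
      rw [List.eq_replicate_iff]
      refine ⟨by simp, ?_⟩
      intro x hx
      rcases List.mem_cons.mp hx with rfl | h1
      · exact ha1
      · have := hsc.1 x h1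
        have := hp x (by simp [h1])
        omega
    · obtain ⟨t₁, ht₁, ht₂, ht₃⟩ := ih hsc.2 (fun x hx => hp x (by simp [hx]))
      refine ⟨a :: t₁, ?_, ?_, by simp; omega⟩
      · simp only [List.cons_append, List.length_cons]
        rw [show t.length + 1 - (t₁.length + 1) = t.length - t₁.length by omega]
        rw [← ht₁]
      · intro x hx
        rcases List.mem_cons.mp hx with rfl | h1
        · omega
        · exact ht₂ x h1

/-- Padding with `1`s : partitions of `n` with at most `k` parts correspond to
partitions of `n+k` with exactly `k` parts. -/
lemma ncard_PE1_eq_NB (k n : ℕ) : (PE 1 k (n + k)).ncard = NB k n := by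
  have himg : (fun l : List ℕ => l.map (· + 1) ++ List.replicate (k - l.length) 1) '' PB k n
      = PE 1 k (n + k) := by
    ext l
    simp only [PE, PB, Set.mem_image, Set.mem_setOf_eq]
    constructor
    · rintro ⟨t, ⟨⟨⟨hts, htp⟩, htsum⟩, htlen⟩, rfl⟩
      refine ⟨⟨⟨?_, ?_⟩, ?_⟩, ?_, ?_⟩
      · rw [List.pairwise_append]
        refine ⟨sorted_map_add_one hts, List.pairwise_replicate.mpr (Or.inr le_rfl), ?_⟩
        intro a hamem b hbmem
        obtain ⟨y, hy, rfl⟩ := List.mem_map.mp hamem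
        have := List.eq_of_mem_replicate hbmem
        omega
      · intro x hx
        rcases List.mem_append.mp hx with h1 | h1
        · obtain ⟨y, hy, rfl⟩ := List.mem_map.mp h1
          omega
        · have := List.eq_of_mem_replicate h1
          omega
      · rw [List.sum_append, sum_map_add_one, List.sum_replicate, htsum, smul_eq_mul]
        omega
      · simp only [List.length_append, List.length_map, List.length_replicate]
        omega
      · intro x hx
        rcases List.mem_append.mp hx with h1 | h1
        · obtain ⟨y, hy, rfl⟩ := List.mem_map.mp h1
          omega
        · have := List.eq_of_mem_replicate h1
          omega
    · rintro ⟨⟨⟨hls, hlp⟩, hlsum⟩, hllen, hlb⟩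
      obtain ⟨l₁, hl₁, hl₂, hl₃⟩ := split_ones l hls (fun x hx => hlp x hx)
      refine ⟨l₁.map (· - 1), ⟨⟨⟨sorted_map_sub_one ?_, ?_⟩, ?_⟩, ?_⟩, ?_⟩
      · rw [hl₁, List.pairwise_append] at hls
        exact hls.1
      · intro x hx
        obtain ⟨y, hy, rfl⟩ := List.mem_map.mp hx
        have := hl₂ y hy
        omega
      · have h2 : ∀ x ∈ l₁, 1 ≤ x := fun x hx => by have := hl₂ x hx; omega
        rw [sum_map_sub_one l₁ h2]
        have hsl : l.sum = l₁.sum + (l.length - l₁.length) * 1 := by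
          conv_lhs => rw [hl₁]
          rw [List.sum_append, List.sum_replicate, smul_eq_mul]
        rw [hlsum, hllen] at hsl
        have h1len := mul_length_le_sum 1 l₁ h2
        omega
      · rw [List.length_map]
        omega
      · have h2 : ∀ x ∈ l₁, 1 ≤ x := fun x hx => by have := hl₂ x hx; omega
        rw [map_add_sub_one l₁ h2, List.length_map]
        rw [show k - l₁.length = l.length - l₁.length by omega, ← hl₁]
  have hinj : Set.InjOn (fun l : List ℕ => l.map (· + 1) ++ List.replicate (k - l.length) 1)
      (PB k n) := by
    intro a ha b hb hab
    have key : ∀ t : List ℕ, (∀ x ∈ t, 1 ≤ x) →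
        ((t.map (· + 1) ++ List.replicate (k - t.length) 1).filter (fun x => 2 ≤ x))
          = t.map (· + 1) := by
      intro t ht
      rw [List.filter_append]
      have h1 : (t.map (· + 1)).filter (fun x => 2 ≤ x) = t.map (· + 1) := by
        rw [List.filter_eq_self]
        intro x hx
        obtain ⟨y, hy, rfl⟩ := List.mem_map.mp hx
        have := ht y hy
        simp only [decide_eq_true_eq]
        omega
      have h2 : (List.replicate (k - t.length) 1).filter (fun x => (2:ℕ) ≤ x) = [] := by
        rw [List.filter_eq_nil_iff]
        intro x hx
        have := List.eq_of_mem_replicate hx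
        simp [this]
      rw [h1, h2, List.append_nil]
    have h1 := key a (fun x hx => ha.1.1.2 x hx)
    have h2 := key b (fun x hx => hb.1.1.2 x hx)
    have hab' : a.map (· + 1) ++ List.replicate (k - a.length) 1
        = b.map (· + 1) ++ List.replicate (k - b.length) 1 := hab
    rw [hab'] at h1
    have hmap : a.map (· + 1) = b.map (· + 1) := h1.symm.trans h2
    have := congrArg (List.map (· - 1)) hmap
    rwa [map_sub_add_one, map_sub_add_one] at this
  rw [← himg, Set.ncard_image_of_injOn hinj]
  rfl

lemma ncard_PE_gen (c k n : ℕ) (hc : 1 ≤ c) : (PE c k (n + c*k)).ncard = NB k n := by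
  obtain ⟨d, rfl⟩ : ∃ d, c = 1 + d := ⟨c - 1, by omega⟩
  have harith : n + (1+d)*k = (n + k) + d*k := by ring
  rw [harith, ncard_PE_one d k (n+k), ncard_PE1_eq_NB]

lemma NB_zero_left (n : ℕ) : NB 0 n = if n = 0 then 1 else 0 := by
  rcases Nat.eq_zero_or_pos n with rfl | hn
  · rw [if_pos rfl, NB]
    have : PB 0 0 = {[]} := by
      ext l
      simp only [PB, Set.mem_setOf_eq, Set.mem_singleton_iff]
      constructor
      · intro hl
        have h0 : l ∈ {l : List ℕ | IsPartitionOf 0 l} := hl.1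
        rw [partitionOf_zero] at h0
        exact h0
      · rintro rfl
        exact ⟨⟨⟨List.Pairwise.nil, by simp⟩, rfl⟩, by simp⟩
    rw [this, Set.ncard_singleton]
  · rw [if_neg (by omega), NB]
    convert Set.ncard_empty (List ℕ)
    ext l
    simp only [PB, Set.mem_setOf_eq, Set.mem_empty_iff_false, iff_false, not_and]
    intro hl hlen
    have := length_le_sum l hl.1.2
    rw [hl.2] at this
    cases l with
    | nil => exact absurd hl.2.symm (by simpa using hn.ne')
    | cons a t => simp at hlen

lemma NB_succ (k n : ℕ) :
    NB (k+1) n = NB k n + (if k+1 ≤ n then NB (k+1) (n-(k+1)) else 0) := by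
  have himg : PB (k+1) n = PB k n ∪ PE 1 (k+1) n := by
    ext l
    simp only [PB, PE, Set.mem_union, Set.mem_setOf_eq]
    constructor
    · rintro ⟨hl, hlen⟩
      rcases Nat.lt_or_ge l.length (k+1) with h1 | h1
      · exact Or.inl ⟨hl, by omega⟩
      · exact Or.inr ⟨hl, by omega, fun x hx => hl.1.2 x hx⟩
    · rintro (⟨hl, hlen⟩ | ⟨hl, hlen, _⟩)
      · exact ⟨hl, by omega⟩
      · exact ⟨hl, by omega⟩
  have hdisj : Disjoint (PB k n) (PE 1 (k+1) n) := by
    rw [Set.disjoint_left]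
    rintro l ⟨_, hlen⟩ ⟨_, hlen2, _⟩
    omega
  rw [NB, himg, Set.ncard_union_eq hdisj (finite_PB _ _) (finite_PE _ _ _)]
  by_cases h : k+1 ≤ n
  · rw [if_pos h]
    congr 1
    have hPE := ncard_PE_gen 1 (k+1) (n-(k+1)) le_rfl
    rw [show (n-(k+1)) + 1*(k+1) = n by omega] at hPE
    rw [hPE]
  · rw [if_neg h]
    rw [PE_empty (by omega), Set.ncard_empty, NB]

lemma NA_eq_NB : ∀ m k n, k + n ≤ m → NA k n = NB k n := by
  intro m
  induction m with
  | zero =>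
    intro k n h
    obtain rfl : k = 0 := by omega
    obtain rfl : n = 0 := by omega
    rw [NA_zero_left, NB_zero_left]
  | succ m ih =>
    intro k n h
    cases k with
    | zero => rw [NA_zero_left, NB_zero_left]
    | succ k =>
      rw [NA_succ, NB_succ, ih k n (by omega)]
      by_cases h1 : k+1 ≤ n
      · rw [if_pos h1, if_pos h1, ih (k+1) (n-(k+1)) (by omega)]
      · rw [if_neg h1, if_neg h1]

/-! ### Decomposition of Rogers-Ramanujan partitions by length -/

lemma Sq_len_eq_PE (n j : ℕ) :
    {l : List ℕ | IsPartitionOf n l ∧ IsRR l ∧ l.length = j} = PE j j n := by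
  ext l
  simp only [PE, Set.mem_setOf_eq, IsRR]
  constructor
  · rintro ⟨hl, hrr, hlen⟩
    exact ⟨hl, hlen, fun x hx => hlen ▸ hrr x hx⟩
  · rintro ⟨hl, hlen, hb⟩
    exact ⟨hl, fun x hx => hlen.symm ▸ hb x hx, hlen⟩

lemma q_eq_sum_PE (n : ℕ) :
    q n = ∑ j ∈ Finset.range (n+1), (PE j j n).ncard := by
  have key : ∀ J, {l : List ℕ | IsPartitionOf n l ∧ IsRR l ∧ l.length ≤ J}.ncard
      = ∑ j ∈ Finset.range (J+1), (PE j j n).ncard := by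
    intro J
    induction J with
    | zero =>
      rw [Finset.sum_range_one, ← Sq_len_eq_PE]
      congr 1
      ext l
      simp only [Set.mem_setOf_eq]
      constructor
      · rintro ⟨h1, h2, h3⟩
        exact ⟨h1, h2, by omega⟩
      · rintro ⟨h1, h2, h3⟩
        exact ⟨h1, h2, by omega⟩
    | succ J ih =>
      rw [Finset.sum_range_succ, ← ih, ← Sq_len_eq_PE]
      have hsplit : {l : List ℕ | IsPartitionOf n l ∧ IsRR l ∧ l.length ≤ J+1}
          = {l : List ℕ | IsPartitionOf n l ∧ IsRR l ∧ l.length ≤ J}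
            ∪ {l : List ℕ | IsPartitionOf n l ∧ IsRR l ∧ l.length = J+1} := by
        ext l
        simp only [Set.mem_union, Set.mem_setOf_eq]
        constructor
        · rintro ⟨h1, h2, h3⟩
          rcases Nat.lt_or_ge l.length (J+1) with h4 | h4
          · exact Or.inl ⟨h1, h2, by omega⟩
          · exact Or.inr ⟨h1, h2, by omega⟩
        · rintro (⟨h1, h2, h3⟩ | ⟨h1, h2, h3⟩)
          · exact ⟨h1, h2, by omega⟩
          · exact ⟨h1, h2, by omega⟩
      have hd : Disjoint {l : List ℕ | IsPartitionOf n l ∧ IsRR l ∧ l.length ≤ J}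
          {l : List ℕ | IsPartitionOf n l ∧ IsRR l ∧ l.length = J+1} := by
        rw [Set.disjoint_left]
        rintro l ⟨_, _, h1⟩ ⟨_, _, h2⟩
        omega
      rw [hsplit, Set.ncard_union_eq hd ((finite_partitionOf n).subset (fun _ h => h.1))
        ((finite_partitionOf n).subset (fun _ h => h.1))]
  have hq : {l : List ℕ | IsPartitionOf n l ∧ IsRR l}
      = {l : List ℕ | IsPartitionOf n l ∧ IsRR l ∧ l.length ≤ n} := by
    ext l
    simp only [Set.mem_setOf_eq]
    constructor
    · rintro ⟨h1, h2⟩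
      refine ⟨h1, h2, ?_⟩
      have := length_le_sum l h1.1.2
      have h5 := h1.2
      omega
    · rintro ⟨h1, h2, _⟩
      exact ⟨h1, h2⟩
  rw [q, hq, key n]

lemma ncard_PE_diag (n j : ℕ) (hn : 1 ≤ n) :
    (PE j j n).ncard = if j*j ≤ n then NB j (n - j*j) else 0 := by
  rcases Nat.eq_zero_or_pos j with rfl | hj
  · simp only [Nat.mul_zero, Nat.zero_le, if_pos, Nat.sub_zero]
    rw [NB_zero_left, if_neg (by omega)]
    convert Set.ncard_empty (List ℕ)
    ext l
    simp only [PE, Set.mem_setOf_eq, Set.mem_empty_iff_false, iff_false, not_and]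
    rintro hl hlen
    rw [List.length_eq_zero_iff] at hlen
    subst hlen
    have := hl.2
    simp at this
    omega
  · by_cases h : j*j ≤ n
    · rw [if_pos h]
      have hPE := ncard_PE_gen j j (n - j*j) hj
      rw [show (n - j*j) + j*j = n by omega] at hPE
      exact hPE
    · rw [if_neg h, PE_empty (by omega), Set.ncard_empty]

lemma q_formula (n : ℕ) (hn : 1 ≤ n) :
    q n = ∑ j ∈ Finset.range (n+1), (if j*j ≤ n then NA j (n - j*j) else 0) := by
  rw [q_eq_sum_PE n]
  apply Finset.sum_congr rfl
  intro j hj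
  rw [ncard_PE_diag n j hn]
  by_cases h : j*j ≤ n
  · rw [if_pos h, if_pos h, NA_eq_NB (j + (n - j*j)) j (n - j*j) le_rfl]
  · rw [if_neg h, if_neg h]


noncomputable section
open PowerSeries

abbrev R := PowerSeries ℤ
abbrev XX : R := PowerSeries.X

/-- Gaussian binomial coefficient as a power series (a polynomial), `ℤ`-indexed column. -/
def GB : ℕ → ℤ → R
  | 0, k => if k = 0 then 1 else 0
  | (n+1), k => if k ≤ 0 then (if k = 0 then 1 else 0)
      else GB n k + XX ^ (((n:ℤ)+1-k).toNat) * GB n (k-1)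

lemma GB_neg (n : ℕ) (k : ℤ) (hk : k < 0) : GB n k = 0 := by
  cases n with
  | zero => simp [GB, hk.ne]
  | succ n => simp [GB, hk.le, hk.ne]

lemma GB_zero (n : ℕ) : GB n 0 = 1 := by
  cases n with
  | zero => simp [GB]
  | succ n => simp [GB]

lemma GB_gt (n : ℕ) (k : ℤ) (hk : (n:ℤ) < k) : GB n k = 0 := by
  induction n generalizing k with
  | zero => simp [GB]; omega
  | succ n ih =>
    rw [GB]
    rw [if_neg (by omega)]
    rw [ih k (by omega), ih (k-1) (by omega)]
    ring

lemma GB_rule1 (n : ℕ) (k : ℤ) :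
    GB (n+1) k = GB n k + XX ^ (((n:ℤ)+1-k).toNat) * GB n (k-1) := by
  rw [GB]
  rcases lt_trichotomy k 0 with h | h | h
  · rw [if_pos h.le, if_neg h.ne, GB_neg n k h, GB_neg n (k-1) (by omega)]; ring
  · subst h; rw [if_pos le_rfl, if_pos rfl, GB_zero, GB_neg n (0-1) (by omega)]
    push_cast; ring
  · rw [if_neg (by omega)]

lemma GB_rule2 (n : ℕ) (k : ℤ) :
    GB (n+1) k = XX ^ k.toNat * GB n k + GB n (k-1) := by
  induction n generalizing k with
  | zero =>
    rcases lt_trichotomy k 0 with h | h | h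
    · rw [GB_neg _ _ h, GB_neg _ _ h, GB_neg _ (k-1) (by omega : k-1 < 0)]; ring
    · subst h
      rw [GB_zero, GB_zero, GB_neg 0 (0-1) (by omega)]; simp
    · rcases eq_or_lt_of_le (by omega : (1:ℤ) ≤ k) with h1 | h1
      · rw [← h1]
        have u1 : GB 1 1 = 1 := by
          have := GB_rule1 0 1
          rw [GB_gt 0 1 (by norm_num)] at this
          simpa [GB_zero] using this
        rw [u1, GB_gt 0 1 (by norm_num)]
        norm_num
        rw [GB_zero]
      · rw [GB_gt 1 k (by omega), GB_gt 0 k (by omega), GB_gt 0 (k-1) (by omega)]; ring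
  | succ n ih =>
    have key : GB (n+1+1) k = GB (n+1) k + XX ^ (((n:ℤ)+2-k).toNat) * GB (n+1) (k-1) := by
      have := GB_rule1 (n+1) k
      rw [show ((n+1:ℕ):ℤ)+1-k = (n:ℤ)+2-k by push_cast; ring] at this
      exact this
    rw [key]
    conv_lhs => rw [ih k, ih (k-1)]
    conv_rhs => rw [GB_rule1 n k, GB_rule1 n (k-1)]
    rcases le_or_gt k 0 with h | h
    · rw [GB_neg n (k-1) (by omega), GB_neg n (k-1-1) (by omega)]
      ring
    · rcases le_or_gt k ((n:ℤ)+1) with h2 | h2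
      · have e1 : XX ^ (((n:ℤ)+2-k).toNat) * (XX ^ ((k-1).toNat) * GB n (k-1))
            = XX ^ (k.toNat) * (XX ^ (((n:ℤ)+1-k).toNat) * GB n (k-1)) := by
          rw [← mul_assoc, ← mul_assoc, ← pow_add, ← pow_add]
          have : (((n:ℤ)+2-k).toNat) + ((k-1).toNat) = (k.toNat) + (((n:ℤ)+1-k).toNat) := by
            omega
          rw [this]
        have e3 : ((n:ℤ)+1-(k-1)).toNat = ((n:ℤ)+2-k).toNat := by omega
        rw [e3]
        rw [mul_add, mul_add, e1]
        ring
      · have e3 : ((n:ℤ)+1-(k-1)).toNat = ((n:ℤ)+2-k).toNat := by omega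
        rw [e3, GB_gt n (k-1) (by omega), GB_gt n k (by omega)]
        ring

/-- Certificate A : `N+m` even case. -/
lemma GB_lemA (n : ℕ) (c : ℤ) :
    GB (n+2) c = GB (n+1) (c-1) + XX ^ c.toNat * GB n c + XX ^ (n+1) * GB n (c-1) := by
  rw [GB_rule2 (n+1) c, GB_rule1 n c]
  rcases le_or_gt c 0 with h | h
  · rw [GB_neg n (c-1) (by omega)]; ring
  · rcases le_or_gt c ((n:ℤ)+1) with h2 | h2
    · have e : c.toNat + (((n:ℤ)+1-c).toNat) = n+1 := by omega
      rw [mul_add, ← mul_assoc, ← pow_add, e]; ring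
    · rw [GB_gt n (c-1) (by omega), GB_gt n c (by omega)]; ring

/-- Certificate B : `N+m` odd case. -/
lemma GB_lemB (n : ℕ) (c : ℤ) :
    GB (n+2) c = GB (n+1) c + XX ^ (n+1) * GB n (c-1)
      + XX ^ (((n:ℤ)+2-c).toNat) * GB n (c-2) := by
  have key : GB (n+1+1) c = GB (n+1) c + XX ^ (((n:ℤ)+2-c).toNat) * GB (n+1) (c-1) := by
    have := GB_rule1 (n+1) c
    rw [show ((n+1:ℕ):ℤ)+1-c = (n:ℤ)+2-c by push_cast; ring] at this
    exact this
  rw [key, GB_rule2 n (c-1)]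
  rcases le_or_gt c 0 with h | h
  · rw [GB_neg n (c-1) (by omega), GB_neg n (c-1-1) (by omega), GB_neg n (c-2) (by omega)]; ring
  · rcases le_or_gt c ((n:ℤ)+1) with h2 | h2
    · have e : (((n:ℤ)+2-c).toNat) + ((c-1).toNat) = n+1 := by omega
      have e2 : c-1-1 = c-2 := by ring
      rw [e2, mul_add, ← mul_assoc, ← pow_add, e]; ring
    · have e2 : c-1-1 = c-2 := by ring
      rw [e2, GB_gt n (c-1) (by omega)]
      ring


/-- sign `(-1)^m`. -/
def sg (m : ℤ) : ℤ := (-1)^m.natAbs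

lemma sg_succ (m : ℤ) : sg (m+1) = - sg m := by
  unfold sg
  rcases Int.even_or_odd m with h | h
  · rw [(Int.natAbs_even.mpr h).neg_one_pow,
      (Int.natAbs_odd.mpr (by exact h.add_one)).neg_one_pow]
  · rw [(Int.natAbs_odd.mpr h).neg_one_pow,
      (Int.natAbs_even.mpr (by simpa using h.add_one)).neg_one_pow]
    ring

lemma sg_sq (m : ℤ) : sg m * sg m = 1 := by
  unfold sg; rw [← pow_add]
  exact (neg_one_pow_eq_one_iff_even (by norm_num)).mpr ⟨_, rfl⟩

/-- the pentagonal-type exponent `m(5m-1)/2 ≥ 0`, as a natural number. -/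
def gZ (m : ℤ) : ℕ := (m*(5*m-1)/2).toNat

lemma gZ_mul_two (m : ℤ) : (gZ m : ℤ) * 2 = m*(5*m-1) := by
  have h2 : (2:ℤ) ∣ m * (5*m-1) := by
    rcases Int.even_or_odd m with ⟨k,hk⟩|⟨k,hk⟩
    · exact ⟨k*(5*m-1), by rw [hk]; ring⟩
    · exact ⟨m*(5*k+2), by rw [hk]; ring⟩
  have h0 : 0 ≤ m * (5*m-1) := by
    rcases le_or_gt m 0 with h | h
    · nlinarith
    · exact mul_nonneg (by linarith) (by linarith)
  unfold gZ
  omega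

/-- index of the Gaussian binomial in the Schur sum. -/
def cI (N : ℕ) (m : ℤ) : ℤ := ((N:ℤ)+2-5*m)/2

/-- the `m`-th term of the finite Schur (pentagonal) sum. -/
def trm (N : ℕ) (m : ℤ) : R := ((sg m : ℤ) : R) * XX ^ (gZ m) * GB (N+1) (cI N m)

/-- the telescoping certificate. -/
def car (n : ℕ) (m : ℤ) : R :=
  XX ^ ((gZ m) + (cI (n+2) m).toNat) * GB (n+1) (cI (n+2) m)

lemma gZ_succ (m : ℤ) : (gZ (m+1) : ℤ) = (gZ m : ℤ) + 5*m + 2 := by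
  have h1 := gZ_mul_two m
  have h2 := gZ_mul_two (m+1)
  have : (m+1)*(5*(m+1)-1) = m*(5*m-1) + 10*m + 4 := by ring
  omega

lemma trm_case_even (n : ℕ) (m : ℤ) (h : (2:ℤ) ∣ ((n:ℤ)+m)) :
    trm (n+2) m = trm (n+1) m + XX^(n+2) * trm n m + ((sg m : ℤ) : R) * car n m := by
  set c : ℤ := cI (n+2) m with hc
  have hc1 : cI (n+1) m = c - 1 := by unfold cI at *; omega
  have hc0 : cI n m = c - 1 := by unfold cI at *; omega
  have hA : GB (n+3) c = GB (n+2) (c-1) + XX ^ c.toNat * GB (n+1) c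
      + XX ^ (n+2) * GB (n+1) (c-1) := by
    have := GB_lemA (n+1) c
    norm_num at this ⊢
    convert this using 3 <;> omega
  unfold trm car
  rw [hc1, hc0, ← hc]
  rw [show n+2+1 = n+3 from rfl, hA]
  have hx : ((sg m : ℤ) : R) * XX ^ gZ m * (XX ^ c.toNat * GB (n+1) c)
      = ((sg m : ℤ) : R) * (XX ^ (gZ m + c.toNat) * GB (n+1) c) := by
    rw [pow_add]; ring
  rw [mul_add, mul_add, hx]
  ring

lemma trm_case_odd (n : ℕ) (m : ℤ) (h : ¬ (2:ℤ) ∣ ((n:ℤ)+m)) :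
    trm (n+2) m = trm (n+1) m + XX^(n+2) * trm n m + ((sg m : ℤ) : R) * car n (m+1) := by
  set c : ℤ := cI (n+2) m with hc
  have hcc : 2*c = (n:ℤ)+3-5*m := by unfold cI at hc; omega
  have hc1 : cI (n+1) m = c := by unfold cI at *; omega
  have hc0 : cI n m = c - 1 := by unfold cI at *; omega
  have hc2 : cI (n+2) (m+1) = c - 2 := by unfold cI at *; omega
  have hB : GB (n+3) c = GB (n+2) c + XX ^ (n+2) * GB (n+1) (c-1)
      + XX ^ (((n:ℤ)+3-c).toNat) * GB (n+1) (c-2) := by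
    have := GB_lemB (n+1) c
    norm_num at this ⊢
    convert this using 4 <;> omega
  unfold trm car
  rw [hc1, hc0, hc2, ← hc]
  rw [show n+2+1 = n+3 from rfl, hB]
  have hx : ((sg m : ℤ) : R) * XX ^ gZ m * (XX ^ (((n:ℤ)+3-c).toNat) * GB (n+1) (c-2))
      = ((sg m : ℤ) : R) * (XX ^ (gZ (m+1) + (c-2).toNat) * GB (n+1) (c-2)) := by
    rcases le_or_gt 0 (c-2) with h2 | h2
    · rcases le_or_gt (c-2) ((n:ℤ)+1) with h3 | h3
      · have he : gZ m + (((n:ℤ)+3-c).toNat) = gZ (m+1) + (c-2).toNat := by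
          have hg := gZ_succ m
          omega
        rw [← he, pow_add]
        ring
      · rw [GB_gt (n+1) (c-2) (by omega)]
        ring
    · rw [GB_neg (n+1) (c-2) h2]
      ring
  rw [mul_add, mul_add, hx]
  ring

/-- The finite Schur (pentagonal Gaussian-binomial) sum. -/
def SS (N : ℕ) : R := ∑ m ∈ Finset.Icc (-(N:ℤ)-2) ((N:ℤ)+2), trm N m

lemma trm_vanish (N : ℕ) (m : ℤ) (h : m < -(N:ℤ)-2 ∨ (N:ℤ)+3 ≤ m) : trm N m = 0 := by
  rcases h with h | h
  · have : ((N:ℤ)+1) < cI N m := by unfold cI; omega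
    rw [trm, GB_gt _ _ (by push_cast; omega)]
    ring
  · have : cI N m < 0 := by unfold cI; omega
    rw [trm, GB_neg _ _ this]
    ring

lemma car_vanish (n : ℕ) (m : ℤ) (h : m ≤ -(n:ℤ)-3 ∨ (n:ℤ)+4 ≤ m) : car n m = 0 := by
  rcases h with h | h
  · have : ((n:ℤ)+1) < cI (n+2) m := by unfold cI; omega
    rw [car, GB_gt _ _ (by push_cast; omega)]
    ring
  · have : cI (n+2) m < 0 := by unfold cI; omega
    rw [car, GB_neg _ _ this]
    ring

lemma sum_core (N : ℕ) (a b : ℤ) (ha : a ≤ -(N:ℤ)-2) (hb : (N:ℤ)+2 ≤ b) :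
    ∑ m ∈ Finset.Icc a b, trm N m = SS N := by
  rw [SS]
  refine (Finset.sum_subset ?_ ?_).symm
  · intro x hx
    simp only [Finset.mem_Icc] at hx ⊢
    omega
  · intro x hx hx2
    simp only [Finset.mem_Icc] at hx hx2
    exact trm_vanish N x (by omega)

lemma telescope (f : ℤ → R) (a : ℤ) : ∀ b, a - 1 ≤ b →
    ∑ m ∈ Finset.Icc a b, (f m - f (m+1)) = f a - f (b+1) := by
  intro b hb
  obtain ⟨j, hj⟩ : ∃ j : ℕ, b = a - 1 + j := ⟨(b - (a-1)).toNat, by omega⟩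
  subst hj
  induction j with
  | zero =>
    rw [Finset.Icc_eq_empty (by push_cast; omega)]
    rw [show a - 1 + ((0:ℕ):ℤ) + 1 = a by push_cast; omega]
    simp
  | succ j ih =>
    have hins : Finset.Icc a (a-1+((j+1:ℕ):ℤ)) = insert (a-1+((j+1:ℕ):ℤ))
        (Finset.Icc a (a-1+(j:ℕ))) := by
      ext x
      simp only [Finset.mem_Icc, Finset.mem_insert]
      push_cast
      omega
    rw [hins, Finset.sum_insert (by simp only [Finset.mem_Icc, not_and, not_le]; push_cast; omega),
      ih (by push_cast; omega)]
    rw [show a-1+((j+1:ℕ):ℤ) = a-1+(j:ℕ)+1 by push_cast; ring]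
    abel

lemma SS_rec (n : ℕ) : SS (n+2) = SS (n+1) + XX^(n+2) * SS n := by
  classical
  set a : ℤ := -(n:ℤ)-4 with hadef
  set b : ℤ := (n:ℤ)+4 with hbdef
  have h2 : SS (n+2) = ∑ m ∈ Finset.Icc a b, trm (n+2) m :=
    (sum_core _ a b (by push_cast; omega) (by push_cast; omega)).symm
  have h1 : SS (n+1) = ∑ m ∈ Finset.Icc a b, trm (n+1) m :=
    (sum_core _ a b (by push_cast; omega) (by push_cast; omega)).symm
  have h0 : SS n = ∑ m ∈ Finset.Icc a b, trm n m :=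
    (sum_core _ a b (by push_cast; omega) (by push_cast; omega)).symm
  rw [h2, h1, h0, Finset.mul_sum, ← Finset.sum_add_distrib]
  have key : ∀ m ∈ Finset.Icc a b, trm (n+2) m =
      (trm (n+1) m + XX^(n+2) * trm n m) +
      ((fun m => if (2:ℤ) ∣ ((n:ℤ)+m) then ((sg m : ℤ) : R) * car n m else 0) m
        - (fun m => if (2:ℤ) ∣ ((n:ℤ)+m) then ((sg m : ℤ) : R) * car n m else 0) (m+1)) := by
    intro m _
    by_cases hd : (2:ℤ) ∣ ((n:ℤ)+m)
    · rw [trm_case_even n m hd]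
      simp only [if_pos hd, if_neg (by omega : ¬ (2:ℤ) ∣ ((n:ℤ)+(m+1)))]
      ring
    · rw [trm_case_odd n m hd]
      simp only [if_neg hd, if_pos (by omega : (2:ℤ) ∣ ((n:ℤ)+(m+1)))]
      rw [sg_succ]
      push_cast
      ring
  rw [Finset.sum_congr rfl key, Finset.sum_add_distrib,
    telescope _ a b (by omega)]
  have hca : car n a = 0 := car_vanish n a (by omega)
  have hcb : car n (b+1) = 0 := car_vanish n (b+1) (by omega)
  simp [hca, hcb]

/-- `dd N k`: generating polynomial of partitions with parts in `(k, N]` and gaps `≥ 2`. -/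
def dd (N k : ℕ) : R :=
  if N ≤ k then 1 else dd N (k+1) + XX^(k+1) * dd N (k+2)
termination_by N - k

lemma dd_big (N k : ℕ) (h : N ≤ k) : dd N k = 1 := by rw [dd, if_pos h]

lemma dd_small (N k : ℕ) (h : k < N) : dd N k = dd N (k+1) + XX^(k+1) * dd N (k+2) := by
  rw [dd, if_neg (by omega)]

lemma dd_rec (n : ℕ) : ∀ j k, n + 1 - k = j → k ≤ n+1 →
    dd (n+2) k = dd (n+1) k + XX^(n+2) * dd n k := by
  intro j
  induction j using Nat.strong_induction_on with
  | _ j ih =>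
    intro k hj hk
    rcases eq_or_lt_of_le hk with rfl | h1
    · -- k = n+1
      rw [dd_small (n+2) (n+1) (by omega), dd_big (n+2) (n+2) le_rfl,
        dd_big (n+2) (n+3) (by omega), dd_big (n+1) (n+1) le_rfl, dd_big n (n+1) (by omega)]
    · rcases eq_or_lt_of_le (by omega : k ≤ n) with h2 | h2
      · -- k = n
        subst h2
        rw [dd_small (k+2) k (by omega), dd_small (k+2) (k+1) (by omega),
          dd_big (k+2) (k+2) le_rfl, dd_big (k+2) (k+3) (by omega),
          dd_small (k+1) k (by omega), dd_big (k+1) (k+1) le_rfl,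
          dd_big (k+1) (k+2) (by omega), dd_big k k le_rfl]
        ring
      · -- k ≤ n - 1
        rw [dd_small (n+2) k (by omega),
          ih (n+1-(k+1)) (by omega) (k+1) rfl (by omega),
          ih (n+1-(k+2)) (by omega) (k+2) rfl (by omega),
          dd_small (n+1) k (by omega), dd_small n k (by omega)]
        ring

lemma GB_one_one : GB 1 1 = 1 := by
  have := GB_rule1 0 1
  rw [GB_gt 0 1 (by norm_num)] at this
  simpa [GB_zero] using this

lemma GB_two_one : GB 2 1 = 1 + XX := by
  have h := GB_rule1 1 1
  rw [GB_one_one] at h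
  rw [show ((1:ℕ):ℤ)+1-1 = 1 by norm_num, show (1:ℤ)-1 = 0 by norm_num, GB_zero] at h
  simpa using h

lemma SS_zero : SS 0 = 1 := by
  rw [SS]
  norm_num
  rw [Finset.sum_eq_single 0]
  · rw [trm]
    have : cI 0 0 = 1 := by decide
    rw [this, GB_one_one]
    simp [sg, gZ]
  · intro m hm hm0
    simp only [Finset.mem_Icc] at hm
    rcases le_or_gt m (-1) with h | h
    · have : ((0:ℕ):ℤ)+1 < cI 0 m := by unfold cI; omega
      rw [trm, GB_gt _ _ (by push_cast; omega)]
      ring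
    · have : cI 0 m < 0 := by unfold cI; omega
      rw [trm, GB_neg _ _ this]
      ring
  · intro h
    simp at h
lemma SS_one : SS 1 = 1 + XX := by
  rw [SS]
  norm_num
  rw [Finset.sum_eq_single 0]
  · rw [trm]
    have : cI 1 0 = 1 := by decide
    rw [this, GB_two_one]
    simp [sg, gZ]
  · intro m hm hm0
    simp only [Finset.mem_Icc] at hm
    rcases le_or_gt m (-1) with h | h
    · have : ((1:ℕ):ℤ)+1 < cI 1 m := by unfold cI; omega
      rw [trm, GB_gt _ _ (by push_cast; omega)]
      ring
    · have : cI 1 m < 0 := by unfold cI; omega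
      rw [trm, GB_neg _ _ this]
      ring
  · intro h
    simp at h

lemma dd_eq_SS : ∀ N, dd N 0 = SS N := by
  intro N
  induction N using Nat.strong_induction_on with
  | _ N ih =>
    match N with
    | 0 => rw [dd_big 0 0 le_rfl, SS_zero]
    | 1 =>
      rw [dd_small 1 0 (by omega), dd_big 1 1 le_rfl, dd_big 1 2 (by omega), SS_one]
      ring
    | (n+2) =>
      rw [dd_rec n (n+1) 0 (by omega) (by omega), ih (n+1) (by omega), ih n (by omega),
        SS_rec]


/-! ### Generating functions -/

open PowerSeries

/-- generating function of partitions with parts at most `k`. -/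
def HS (k : ℕ) : R := PowerSeries.mk (fun n => (NA k n : ℤ))

lemma coeff_HS (k n : ℕ) : (coeff n) (HS k) = (NA k n : ℤ) := coeff_mk n _

lemma coeff_pow_mul (f : R) (a n : ℕ) :
    (coeff n) (XX^a * f) = if a ≤ n then (coeff (n-a)) f else 0 := by
  rw [PowerSeries.coeff_X_pow_mul' f a n]

lemma HS_step (k : ℕ) : HS (k+1) * (1 - XX^(k+1)) = HS k := by
  ext n
  rw [mul_sub, mul_one, map_sub, mul_comm, coeff_pow_mul, coeff_HS, coeff_HS]
  have := NA_succ k n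
  by_cases h : k+1 ≤ n
  · rw [if_pos h, coeff_HS]
    rw [if_pos h] at this
    push_cast [this]
    ring
  · rw [if_neg h, add_zero] at this
    rw [if_neg h, sub_zero, coeff_HS, this]

def EE (N : ℕ) : R := ∏ i ∈ Finset.range N, (1 - XX^(i+1))

lemma HS_zero_eq : HS 0 = 1 := by
  ext n
  rw [coeff_HS, NA_zero_left, PowerSeries.coeff_one]
  by_cases h : n = 0 <;> simp [h]

lemma HS_mul_EE (k : ℕ) : HS k * EE k = 1 := by
  induction k with
  | zero => simp [EE, HS_zero_eq]
  | succ k ih =>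
    rw [EE, Finset.prod_range_succ, ← EE]
    calc HS (k+1) * (EE k * (1 - XX^(k+1)))
        = (HS (k+1) * (1 - XX^(k+1))) * EE k := by ring
    _ = HS k * EE k := by rw [HS_step]
    _ = 1 := ih

def EI (a b : ℕ) : R := ∏ i ∈ Finset.Ico a b, (1 - XX^i)

lemma EE_eq_EI (N : ℕ) : EE N = EI 1 (N+1) := by
  rw [EE, EI, Finset.prod_Ico_eq_prod_range]
  simp only [Nat.add_sub_cancel]
  apply Finset.prod_congr rfl
  intro i _
  rw [Nat.add_comm 1 i]

lemma HS_mul_EI (j N : ℕ) (h : j ≤ N) : HS j * EI 1 (N+1) = EI (j+1) (N+1) := by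
  have hsplit : EI 1 (j+1) * EI (j+1) (N+1) = EI 1 (N+1) :=
    Finset.prod_Ico_consecutive _ (by omega) (by omega)
  rw [← hsplit, ← mul_assoc, ← EE_eq_EI, HS_mul_EE, one_mul]

/-- stable coefficients of the Gaussian binomials count partitions. -/
lemma coeff_GB : ∀ N k n : ℕ, n + k ≤ N → (coeff n) (GB N (k:ℤ)) = (NA k n : ℤ) := by
  intro N
  induction N with
  | zero =>
    intro k n h
    obtain rfl : k = 0 := by omega
    obtain rfl : n = 0 := by omega
    rw [show ((0:ℕ):ℤ) = 0 from rfl, GB_zero, NA_zero_right]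
    simp
  | succ N ih =>
    intro k n h
    cases k with
    | zero =>
      rw [show ((0:ℕ):ℤ) = 0 from rfl, GB_zero, NA_zero_left]
      rw [PowerSeries.coeff_one]
      by_cases h0 : n = 0 <;> simp [h0]
    | succ k =>
      rw [show ((k+1:ℕ):ℤ) = (k:ℤ)+1 by push_cast; ring, GB_rule2 N ((k:ℤ)+1)]
      rw [show ((k:ℤ)+1-1) = (k:ℤ) by ring]
      rw [show ((k:ℤ)+1).toNat = k+1 by omega]
      rw [map_add, coeff_pow_mul, ih k n (by omega), NA_succ]
      by_cases h1 : k+1 ≤ n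
      · rw [if_pos h1, if_pos h1,
          show ((k:ℤ)+1) = ((k+1:ℕ):ℤ) by push_cast; ring,
          ih (k+1) (n-(k+1)) (by omega)]
        push_cast
        ring
      · rw [if_neg h1, if_neg h1]
        push_cast
        ring

def QQ (N : ℕ) : R := ∑ j ∈ Finset.range (N+1), XX^(j*j) * HS j

lemma coeff_QQ (n N : ℕ) (h : n ≤ N) (hn : 1 ≤ n) : (coeff n) (QQ N) = (q n : ℤ) := by
  rw [QQ, map_sum]
  have hterm : ∀ j ∈ Finset.range (N+1), (coeff n) (XX^(j*j) * HS j)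
      = ((if j*j ≤ n then NA j (n - j*j) else 0 : ℕ) : ℤ) := by
    intro j _
    rw [coeff_pow_mul]
    by_cases h1 : j*j ≤ n
    · rw [if_pos h1, if_pos h1, coeff_HS]
    · rw [if_neg h1, if_neg h1]
      simp
  rw [Finset.sum_congr rfl hterm, ← Nat.cast_sum]
  have hq := q_formula n hn
  have hext : ∑ j ∈ Finset.range (n+1), (if j*j ≤ n then NA j (n - j*j) else 0)
      = ∑ j ∈ Finset.range (N+1), (if j*j ≤ n then NA j (n - j*j) else 0) := by
    apply Finset.sum_subset
    · intro x hx
      simp only [Finset.mem_range] at hx ⊢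
      omega
    · intro x hx hx2
      simp only [Finset.mem_range] at hx hx2
      rw [if_neg (by nlinarith)]
  rw [← hext, ← hq]

def W (k N : ℕ) : R := ∑ j ∈ Finset.range (N+1), XX^(j*(j+k)) * EI (j+1) (N+1)

lemma QQ_mul_EE (N : ℕ) : QQ N * EE N = W 0 N := by
  rw [QQ, W, Finset.sum_mul]
  apply Finset.sum_congr rfl
  intro j hj
  simp only [Finset.mem_range] at hj
  rw [mul_assoc, EE_eq_EI, HS_mul_EI j N (by omega)]
  norm_num

lemma EI_succ_bot (j N : ℕ) (h : j < N+1) (hj : 1 ≤ j) :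
    (1 - XX^j) * EI (j+1) (N+1) = EI j (N+1) := by
  rw [EI, EI, Finset.prod_eq_prod_Ico_succ_bot h]

lemma EI_self (a : ℕ) : EI a a = 1 := by
  rw [EI, Finset.Ico_self, Finset.prod_empty]

lemma W_rec (k N : ℕ) :
    W k N + XX^(N*(N+k+2)+(k+1)) = W (k+1) N + XX^(k+1) * W (k+2) N := by
  have hA : W k N - W (k+1) N
      = ∑ j ∈ Finset.range (N+1), (XX^(j*(j+k)) - XX^(j*(j+k+1))) * EI (j+1) (N+1) := by
    rw [W, W, ← Finset.sum_sub_distrib]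
    apply Finset.sum_congr rfl
    intro j _
    ring
  have hB : ∑ j ∈ Finset.range (N+1), (XX^(j*(j+k)) - XX^(j*(j+k+1))) * EI (j+1) (N+1)
      = ∑ i ∈ Finset.range N, XX^(k+1) * (XX^(i*(i+k+2)) * EI (i+1) (N+1)) := by
    rw [Finset.sum_range_succ']
    have h0 : (XX^(0*(0+k)) - XX^(0*(0+k+1))) * EI (0+1) (N+1) = 0 := by
      norm_num
    rw [h0, add_zero]
    apply Finset.sum_congr rfl
    intro i hi
    simp only [Finset.mem_range] at hi
    have hEI : EI (i+1) (N+1) = (1 - XX^(i+1)) * EI (i+1+1) (N+1) :=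
      (EI_succ_bot (i+1) N (by omega) (by omega)).symm
    rw [hEI]
    have e1 : (i+1)*(i+1+k+1) = (i+1)*(i+1+k) + (i+1) := by ring
    have e2 : (i+1)*(i+1+k) = (k+1) + i*(i+k+2) := by ring
    rw [e1, e2, pow_add, pow_add]
    ring
  have hC : ∑ i ∈ Finset.range N, XX^(k+1) * (XX^(i*(i+k+2)) * EI (i+1) (N+1))
      = XX^(k+1) * (W (k+2) N - XX^(N*(N+k+2))) := by
    have hW : W (k+2) N = (∑ i ∈ Finset.range N, XX^(i*(i+k+2)) * EI (i+1) (N+1))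
        + XX^(N*(N+k+2)) := by
      rw [W, Finset.sum_range_succ, EI_self, mul_one]
      have e3 : ∀ x : ℕ, x*(x+(k+2)) = x*(x+k+2) := fun x => by ring
      simp only [e3]
    rw [hW, ← Finset.mul_sum]
    ring
  have hmain := hA.trans (hB.trans hC)
  have hpow : XX^(N*(N+k+2)+(k+1)) = XX^(k+1) * XX^(N*(N+k+2)) := by
    rw [← pow_add]
    ring_nf
  rw [hpow]
  linear_combination hmain

lemma coeff_W_tail (k N n : ℕ) (hk : N ≤ k) (hn : n ≤ N) :
    (coeff n) (W k N) = (coeff n) (EI 1 (N+1)) := by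
  rw [W, Finset.sum_range_succ', map_add, map_sum]
  have h0 : (coeff n) (XX^(0*(0+k)) * EI (0+1) (N+1)) = (coeff n) (EI 1 (N+1)) := by
    norm_num
  rw [h0]
  have hz : ∀ i ∈ Finset.range N, (coeff n) (XX^((i+1)*((i+1)+k)) * EI ((i+1)+1) (N+1)) = 0 := by
    intro i _
    rw [coeff_pow_mul, if_neg]
    have : k + 1 ≤ (i+1)*((i+1)+k) := by nlinarith
    omega
  rw [Finset.sum_congr rfl hz]
  simp

lemma coeff_W_dd (N : ℕ) : ∀ j k n : ℕ, N - k = j → n ≤ N →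
    (coeff n) (W k N) = (coeff n) (dd N k * EE N) := by
  intro j
  induction j using Nat.strong_induction_on with
  | _ j ih =>
    intro k n hj hn
    rcases le_or_gt N k with hk | hk
    · rw [dd_big N k hk, one_mul, coeff_W_tail k N n hk hn, EE_eq_EI]
    · have hrec := congrArg (coeff n) (W_rec k N)
      rw [map_add, map_add, PowerSeries.coeff_X_pow, if_neg (by nlinarith), add_zero] at hrec
      rw [hrec, dd_small N k hk, add_mul, map_add]
      congr 1
      · exact ih (N - (k+1)) (by omega) (k+1) n rfl hn
      · rw [mul_assoc, coeff_pow_mul, coeff_pow_mul]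
        by_cases h1 : k+1 ≤ n
        · rw [if_pos h1, if_pos h1, ih (N - (k+2)) (by omega) (k+2) (n-(k+1)) rfl (by omega)]
        · rw [if_neg h1, if_neg h1]

lemma q_eq_coeff_dd (n N : ℕ) (hn : 1 ≤ n) (h : n ≤ N) :
    (q n : ℤ) = (coeff n) (dd N 0) := by
  have h1 : EE N * HS N = 1 := by rw [mul_comm]; exact HS_mul_EE N
  have h2 : (coeff n) (dd N 0) = (coeff n) ((dd N 0 * EE N) * HS N) := by
    rw [mul_assoc, h1, mul_one]
  have h3 : (coeff n) ((dd N 0 * EE N) * HS N) = (coeff n) (W 0 N * HS N) := by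
    rw [PowerSeries.coeff_mul, PowerSeries.coeff_mul]
    apply Finset.sum_congr rfl
    intro x hx
    rw [Finset.HasAntidiagonal.mem_antidiagonal] at hx
    rw [coeff_W_dd N (N - 0) 0 x.1 rfl (by omega)]
  have h4 : (coeff n) (W 0 N * HS N) = (coeff n) (QQ N) := by
    rw [← QQ_mul_EE, mul_assoc, h1, mul_one]
  rw [h2, h3, h4, coeff_QQ n N h hn]

lemma gZ_cast (m : ℤ) : (gZ m : ℤ) = m * (5*m - 1) / 2 := by
  have := gZ_mul_two m
  omega

lemma natAbs_le_gZ (m : ℤ) (hm : m ≠ 0) : (m.natAbs : ℤ) ≤ (gZ m : ℤ) := by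
  have h2 := gZ_mul_two m
  rcases lt_or_gt_of_ne hm with h | h
  · have hna : (m.natAbs : ℤ) = -m := by omega
    have hnn : (0:ℤ) ≤ (-m)*(-(5*m+1)) := mul_nonneg (by omega) (by omega)
    nlinarith [h2, hnn]
  · have hna : (m.natAbs : ℤ) = m := by omega
    have hnn : (0:ℤ) ≤ m*(5*m-3) := mul_nonneg (by omega) (by omega)
    nlinarith [h2, hnn]

lemma coeff_trm_eval (n : ℕ) (hn : 1 ≤ n) (m : ℤ) :
    (coeff n) (trm (7*n+12) m) = (-1)^m.natAbs * pZ ((n:ℤ) - m*(5*m-1)/2) := by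
  have hpz : pZ ((n:ℤ) - m*(5*m-1)/2) = pZ ((n:ℤ) - (gZ m : ℤ)) := by
    rw [gZ_cast]
  rw [hpz, trm, mul_assoc]
  have hsmul : ((sg m : ℤ) : R) * (XX^(gZ m) * GB (7*n+12+1) (cI (7*n+12) m))
      = (sg m) • (XX^(gZ m) * GB (7*n+12+1) (cI (7*n+12) m)) := by
    rw [zsmul_eq_mul]
  rw [hsmul, map_zsmul, smul_eq_mul, coeff_pow_mul]
  by_cases hg : gZ m ≤ n
  · have hmabs : (m.natAbs : ℤ) ≤ (n:ℤ) := by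
      rcases eq_or_ne m 0 with rfl | hm0
      · simp
      · calc (m.natAbs : ℤ) ≤ (gZ m : ℤ) := natAbs_le_gZ m hm0
        _ ≤ n := by exact_mod_cast hg
    have hmb : -(n:ℤ) ≤ m ∧ m ≤ (n:ℤ) := by omega
    have hcnn : 0 ≤ cI (7*n+12) m := by
      unfold cI
      push_cast
      omega
    set kk : ℕ := (cI (7*n+12) m).toNat with hkk
    have hkkc : (kk : ℤ) = cI (7*n+12) m := by omega
    have hkub : (kk : ℤ) ≤ 6*(n:ℤ)+7 := by
      rw [hkkc]
      unfold cI
      push_cast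
      omega
    have hklb : (n:ℤ) ≤ (kk:ℤ) := by
      rw [hkkc]
      unfold cI
      push_cast
      omega
    rw [if_pos hg, ← hkkc, coeff_GB (7*n+12+1) kk (n - gZ m) (by push_cast; omega),
      NA_stab (by omega : n - gZ m ≤ kk)]
    rw [pZ, if_pos (by omega : (0:ℤ) ≤ (n:ℤ) - (gZ m : ℤ))]
    rw [show ((n:ℤ) - (gZ m:ℤ)).toNat = n - gZ m by omega]
    rfl
  · rw [if_neg hg, pZ, if_neg (by omega : ¬ (0:ℤ) ≤ (n:ℤ) - (gZ m : ℤ))]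
    ring

end

/-- For every `n ≥ 1`, `q(n) = Σ_{m ∈ ℤ} (-1)^m p(n - m(5m-1)/2)`,
where `p(k) = 0` for `k < 0` and only finitely many terms are nonzero. -/
theorem schur_identity_combinatorial (n : ℕ) (hn : 1 ≤ n) :
    (q n : ℤ) = ∑ᶠ m : ℤ, (-1) ^ m.natAbs * pZ ((n : ℤ) - m * (5 * m - 1) / 2) := by
  have h1 : (q n : ℤ) = (PowerSeries.coeff n) (dd (7*n+12) 0) :=
    q_eq_coeff_dd n (7*n+12) hn (by omega)
  rw [h1, dd_eq_SS, SS, map_sum, Finset.sum_congr rfl (fun m _ => coeff_trm_eval n hn m)]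
  refine (finsum_eq_sum_of_support_subset _ ?_).symm
  intro m hm
  simp only [Function.mem_support] at hm
  simp only [Finset.coe_Icc, Set.mem_Icc]
  by_contra hctr
  push_neg at hctr
  apply hm
  have hm0 : m ≠ 0 := by
    intro h0
    rw [h0] at hctr
    rcases hctr (by push_cast; omega) with h2
    push_cast at h2
    omega
  have habs : (n:ℤ) + 1 ≤ (m.natAbs : ℤ) := by
    rcases le_or_gt (-(↑(7*n+12):ℤ) - 2) m with h2 | h2
    · have h3 := hctr h2
      omega
    · omega
  have hgm : (n:ℤ) < (gZ m : ℤ) := by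
    have := natAbs_le_gZ m hm0
    omega
  rw [show (n:ℤ) - m*(5*m-1)/2 = (n:ℤ) - (gZ m:ℤ) by rw [gZ_cast], pZ,
    if_neg (by omega)]
  ring
end RR
end

section
/- (Second symmetry) For all integers m ≥ 0 and r with either m > 0 and r > 0, or m = 0 and r ≥ 0, and for every n ≥ 1, h(n,m,≤−r) = h(n−r−2m−2, m+2, ≥−r), where h(k,·,·) = 0 for k < 0. -/
namespace RR

/-- `hC` extended to a (possibly negative) integer size argument, `0` for negative sizes. -/
noncomputable def hCZ (k : ℤ) (m : ℕ) (P : ℤ → Prop) : ℕ :=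
  if 0 ≤ k then hC k.toNat m P else 0

/-! ### Durfee decomposition data -/

@[ext]
structure D where
  s : ℕ
  t : ℕ
  k : ℕ
  al : ℕ → ℕ
  be : ℕ → ℕ
  ga : ℕ → ℕ

structure ValidD (m : ℕ) (d : D) : Prop where
  ht : max m 1 ≤ d.t
  hts : d.t ≤ d.s
  ha : ∀ i j, i ≤ j → d.al j ≤ d.al i
  ha0 : ∀ i, d.s ≤ i → d.al i = 0
  hb : ∀ i j, i ≤ j → d.be j ≤ d.be i
  hb0 : ∀ i, d.t ≤ i → d.be i = 0
  hb1 : d.be 0 + d.t ≤ d.s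
  hg : ∀ i j, i ≤ j → d.ga j ≤ d.ga i
  hgpos : ∀ i, i < d.k → 0 < d.ga i
  hg0 : ∀ i, d.k ≤ i → d.ga i = 0
  hg1 : d.ga 0 + m ≤ d.t

/-- The row function of the reconstructed partition (0-indexed). -/
def Rfun (m : ℕ) (d : D) : ℕ → ℕ := fun j =>
  if j < d.s then d.al j + (d.s - m)
  else if j < d.s + d.t then d.be (j - d.s) + (d.t - m)
  else d.ga (j - d.s - d.t)

def encodeD (m : ℕ) (d : D) : List ℕ :=
  ((List.range (d.s + d.t + d.k)).map (Rfun m d)).filter (fun x => decide (0 < x))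

def sumD (m : ℕ) (d : D) : ℕ :=
  (∑ i ∈ Finset.range d.s, d.al i) + d.s * (d.s - m)
    + (∑ i ∈ Finset.range d.t, d.be i) + d.t * (d.t - m)
    + ∑ i ∈ Finset.range d.k, d.ga i

def rankD (d : D) : ℤ :=
  (d.be 0 : ℤ) + (d.al (d.s - d.t - d.be 0) : ℤ) - (d.k : ℤ)

/-! ### List helpers -/

private lemma getD_eq_zero (l : List ℕ) (h : ∀ x ∈ l, x = 0) (i : ℕ) : l.getD i 0 = 0 := by
  by_cases hi : i < l.length
  · rw [List.getD_eq_getElem l 0 hi]; exact h _ (l.getElem_mem hi)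
  · exact List.getD_eq_default l 0 (le_of_not_gt hi)

private lemma filter_pos_getD (l : List ℕ) (hl : l.Pairwise (· ≥ ·)) (i : ℕ) :
    (l.filter (fun x => decide (0 < x))).getD i 0 = l.getD i 0 := by
  induction l generalizing i with
  | nil => simp
  | cons a l ih =>
    have hl' : l.Pairwise (· ≥ ·) := hl.of_cons
    by_cases ha : 0 < a
    · rw [List.filter_cons_of_pos (by simpa using ha)]
      cases i with
      | zero => simp
      | succ i => simpa using ih hl' i
    · have ha0 : a = 0 := by omega
      have hall : ∀ x ∈ a :: l, x = 0 := by
        intro x hx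
        rcases List.mem_cons.1 hx with rfl | hx
        · exact ha0
        · have := List.rel_of_pairwise_cons hl hx; omega
      rw [List.filter_cons_of_neg (by simpa using ha)]
      rw [ih hl', getD_eq_zero _ (fun x hx => hall x (List.mem_cons_of_mem _ hx)), getD_eq_zero _ hall]

private lemma filter_pos_sum (l : List ℕ) :
    (l.filter (fun x => decide (0 < x))).sum = l.sum := by
  induction l with
  | nil => rfl
  | cons a l ih =>
    by_cases ha : 0 < a
    · rw [List.filter_cons_of_pos (by simpa using ha)]; simp [ih]
    · have : a = 0 := by omega
      rw [List.filter_cons_of_neg (by simpa using ha)]; simp [ih, this]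

private lemma getD_map_range (f : ℕ → ℕ) (N i : ℕ) (h0 : ∀ j, N ≤ j → f j = 0) :
    ((List.range N).map f).getD i 0 = f i := by
  by_cases hi : i < N
  · rw [List.getD_eq_getElem _ 0 (by simpa using hi)]
    simp
  · rw [List.getD_eq_default _ 0 (by simpa using le_of_not_gt hi)]
    exact (h0 i (le_of_not_gt hi)).symm

private lemma sorted_map_range (f : ℕ → ℕ) (N : ℕ) (hf : ∀ i j, i ≤ j → f j ≤ f i) :
    ((List.range N).map f).Pairwise (· ≥ ·) := by
  rw [List.pairwise_map]
  exact List.pairwise_lt_range.imp (fun h => hf _ _ (le_of_lt h))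

private lemma sum_map_range (f : ℕ → ℕ) (N : ℕ) :
    ((List.range N).map f).sum = ∑ i ∈ Finset.range N, f i := by
  induction N with
  | zero => rfl
  | succ N ih => rw [List.range_succ, List.map_append, List.sum_append, Finset.sum_range_succ, ih]; simp


/-! ### Properties of `encodeD` -/

section Encode

variable {m : ℕ} {d : D} (v : ValidD m d)

private lemma hm_le_t (v : ValidD m d) : m ≤ d.t := le_trans (le_max_left m 1) v.ht
private lemma h1_le_t (v : ValidD m d) : 1 ≤ d.t := le_trans (le_max_right m 1) v.ht

include v

private lemma Rfun_anti : ∀ i j, i ≤ j → Rfun m d j ≤ Rfun m d i := by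
  have hmt := hm_le_t v
  have h1t := h1_le_t v
  have hts := v.hts
  have hb1 := v.hb1
  have hg1 := v.hg1
  intro i j hij
  unfold Rfun
  by_cases h1 : j < d.s
  · rw [if_pos (show i < d.s by omega), if_pos h1]
    exact Nat.add_le_add (v.ha _ _ hij) le_rfl
  · by_cases h2 : j < d.s + d.t
    · rw [if_neg h1, if_pos h2]
      have hb0 : d.be (j - d.s) ≤ d.be 0 := v.hb _ _ (Nat.zero_le _)
      by_cases h3 : i < d.s
      · rw [if_pos h3]; omega
      · rw [if_neg h3, if_pos (by omega)]
        exact Nat.add_le_add (v.hb _ _ (by omega)) le_rfl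
    · rw [if_neg h1, if_neg h2]
      have hg0 : d.ga (j - d.s - d.t) ≤ d.ga 0 := v.hg _ _ (Nat.zero_le _)
      by_cases h3 : i < d.s
      · rw [if_pos h3]; omega
      · by_cases h4 : i < d.s + d.t
        · rw [if_neg h3, if_pos h4]; omega
        · rw [if_neg h3, if_neg h4]
          exact v.hg _ _ (by omega)

private lemma Rfun_zero : ∀ j, d.s + d.t + d.k ≤ j → Rfun m d j = 0 := by
  intro j hj
  have hts := v.hts
  have h1t := h1_le_t v
  unfold Rfun
  rw [if_neg (by omega), if_neg (by omega)]
  exact v.hg0 _ (by omega)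

private lemma encode_part (i : ℕ) : part (encodeD m d) i = Rfun m d (i - 1) := by
  unfold part encodeD
  rw [filter_pos_getD _ (sorted_map_range _ _ (Rfun_anti v)), getD_map_range _ _ _ (Rfun_zero v)]

private lemma encode_part_al (i : ℕ) (hi : i < d.s) :
    part (encodeD m d) (i + 1) = d.al i + (d.s - m) := by
  rw [encode_part v]; unfold Rfun; simp only [Nat.add_sub_cancel]; rw [if_pos hi]

private lemma encode_part_be (i : ℕ) (hi : i < d.t) :
    part (encodeD m d) (d.s + i + 1) = d.be i + (d.t - m) := by
  rw [encode_part v]; unfold Rfun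
  simp only [Nat.add_sub_cancel]
  rw [if_neg (by omega), if_pos (by omega)]
  congr 2
  omega

private lemma encode_part_ga (i : ℕ) :
    part (encodeD m d) (d.s + d.t + i + 1) = d.ga i := by
  rw [encode_part v]; unfold Rfun
  simp only [Nat.add_sub_cancel]
  rw [if_neg (by omega), if_neg (by omega)]
  congr 1
  omega

private lemma encode_isPartition : IsPartition (encodeD m d) := by
  constructor
  · exact (sorted_map_range _ _ (Rfun_anti v)).filter _
  · intro x hx
    have := List.of_mem_filter hx
    simpa using this

private lemma encode_sum : (encodeD m d).sum = sumD m d := by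
  unfold encodeD
  rw [filter_pos_sum]
  have h1t := h1_le_t v
  have hts := v.hts
  rw [sum_map_range]
  unfold sumD
  rw [show d.s + d.t + d.k = d.s + (d.t + d.k) by ring, Finset.sum_range_add, Finset.sum_range_add]
  have e1 : ∀ i ∈ Finset.range d.s, Rfun m d i = d.al i + (d.s - m) := by
    intro i hi
    have hi' := Finset.mem_range.1 hi
    unfold Rfun; rw [if_pos hi']
  have e2 : ∀ i ∈ Finset.range d.t, Rfun m d (d.s + i) = d.be i + (d.t - m) := by
    intro i hi
    have hi' := Finset.mem_range.1 hi
    unfold Rfun; rw [if_neg (by omega), if_pos (by omega)]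
    congr 2; omega
  have e3 : ∀ i ∈ Finset.range d.k, Rfun m d (d.s + (d.t + i)) = d.ga i := by
    intro i hi
    unfold Rfun; rw [if_neg (by omega), if_neg (by omega)]
    congr 1; omega
  rw [Finset.sum_congr rfl e1, Finset.sum_congr rfl e2, Finset.sum_congr rfl e3,
    Finset.sum_add_distrib, Finset.sum_add_distrib]
  simp [Finset.sum_const, mul_comm]
  ring

private lemma encode_sD : sD m (encodeD m d) = d.s := by
  have hmt := hm_le_t v
  have h1t := h1_le_t v
  have hts := v.hts
  have hb1 := v.hb1
  apply IsGreatest.csSup_eq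
  constructor
  · constructor
    · omega
    · have := encode_part_al v (d.s - 1) (by omega)
      have h2 : d.s - 1 + 1 = d.s := by omega
      rw [h2] at this
      omega
  · rintro h ⟨hh1, hh2⟩
    by_contra hh
    push_neg at hh
    -- h ≥ s + 1
    have hb : part (encodeD m d) h ≤ part (encodeD m d) (d.s + 1) := by
      rw [encode_part v h, encode_part v (d.s + 1)]
      exact Rfun_anti v _ _ (by omega)
    have := encode_part_be v 0 (by omega)
    rw [show d.s + 0 + 1 = d.s + 1 by ring] at this
    omega

private lemma encode_tD : tD m (encodeD m d) = d.t := by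
  have hmt := hm_le_t v
  have h1t := h1_le_t v
  have hts := v.hts
  have hg1 := v.hg1
  unfold tD
  rw [encode_sD v]
  apply IsGreatest.csSup_eq
  constructor
  · constructor
    · omega
    · have := encode_part_be v (d.t - 1) (by omega)
      have h2 : d.s + (d.t - 1) + 1 = d.s + d.t := by omega
      rw [h2] at this
      omega
  · rintro h ⟨hh1, hh2⟩
    by_contra hh
    push_neg at hh
    have hb : part (encodeD m d) (d.s + h) ≤ part (encodeD m d) (d.s + d.t + 1) := by
      rw [encode_part v _, encode_part v _]
      exact Rfun_anti v _ _ (by omega)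
    have := encode_part_ga v 0
    rw [show d.s + d.t + 0 + 1 = d.s + d.t + 1 by ring] at this
    omega

private lemma encode_gamma1 : gamma1 m (encodeD m d) = d.k := by
  unfold gamma1
  rw [encode_sD v, encode_tD v]
  have hset : {i : ℕ | 1 ≤ i ∧ 0 < part (encodeD m d) (d.s + d.t + i)} =
      ↑(Finset.Icc 1 d.k) := by
    ext i
    simp only [Set.mem_setOf_eq, Finset.coe_Icc, Set.mem_Icc]
    constructor
    · rintro ⟨h1, h2⟩
      refine ⟨h1, ?_⟩
      by_contra hik
      push_neg at hik
      have : d.s + d.t + i = d.s + d.t + (i - 1) + 1 := by omega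
      rw [this, encode_part_ga v] at h2
      have := v.hg0 (i - 1) (by omega)
      omega
    · rintro ⟨h1, h2⟩
      refine ⟨h1, ?_⟩
      have : d.s + d.t + i = d.s + d.t + (i - 1) + 1 := by omega
      rw [this, encode_part_ga v]
      exact v.hgpos _ (by omega)
  rw [hset, Set.ncard_coe_finset, Nat.card_Icc]
  omega

private lemma encode_rank2 : rank2 m (encodeD m d) = rankD d := by
  have hmt := hm_le_t v
  have h1t := h1_le_t v
  have hts := v.hts
  have hb1 := v.hb1
  unfold rank2
  rw [encode_sD v, encode_tD v, encode_gamma1 v]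
  dsimp only
  have hbe : part (encodeD m d) (d.s + 1) = d.be 0 + (d.t - m) := by
    have := encode_part_be v 0 (by omega)
    rwa [show d.s + 0 + 1 = d.s + 1 by ring] at this
  rw [hbe]
  have hb1' : d.be 0 + (d.t - m) - (d.t - m) = d.be 0 := by omega
  rw [hb1']
  have hal : part (encodeD m d) (d.s - d.t - d.be 0 + 1) =
      d.al (d.s - d.t - d.be 0) + (d.s - m) := encode_part_al v _ (by omega)
  rw [hal]
  unfold rankD
  push_cast
  ring

private lemma encode_not_RR (hm0 : m = 0) : ¬ IsRR (encodeD m d) := by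
  subst hm0
  have h1t := h1_le_t v
  have hts := v.hts
  have hb1 := v.hb1
  intro hRR
  set l := encodeD 0 d with hl
  have hlen : d.s < l.length := by
    by_contra hle
    push_neg at hle
    have h1 : part l (d.s + 1) = d.be 0 + (d.t - 0) := by
      have := encode_part_be v 0 (by omega)
      rwa [show d.s + 0 + 1 = d.s + 1 by ring] at this
    have h2 : part l (d.s + 1) = 0 := by
      unfold part
      exact List.getD_eq_default _ _ (by omega)
    omega
  have hx : l.getD (d.s) 0 ∈ l := by
    rw [List.getD_eq_getElem l 0 hlen]
    exact l.getElem_mem hlen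
  have := hRR _ hx
  have h1 : l.getD d.s 0 = part l (d.s + 1) := by unfold part; simp
  have h2 : part l (d.s + 1) = d.be 0 + (d.t - 0) := by
    have := encode_part_be v 0 (by omega)
    rwa [show d.s + 0 + 1 = d.s + 1 by ring] at this
  omega

end Encode

/-! ### Decoding a partition -/

private lemma getD_anti (l : List ℕ) (hl : l.Pairwise (· ≥ ·)) :
    ∀ i j : ℕ, i ≤ j → l.getD j 0 ≤ l.getD i 0 := by
  induction l with
  | nil => simp
  | cons a l ih =>
    intro i j hij
    cases i with
    | zero =>
      cases j with
      | zero => exact le_rfl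
      | succ j =>
        simp only [List.getD_cons_succ, List.getD_cons_zero]
        by_cases hj : j < l.length
        · rw [List.getD_eq_getElem l 0 hj]
          exact List.rel_of_pairwise_cons hl (l.getElem_mem hj)
        · rw [List.getD_eq_default l 0 (le_of_not_gt hj)]; exact Nat.zero_le _
    | succ i =>
      cases j with
      | zero => omega
      | succ j =>
        simp only [List.getD_cons_succ]
        exact ih hl.of_cons i j (by omega)

private lemma part_anti (l : List ℕ) (hl : l.Pairwise (· ≥ ·)) {i j : ℕ} (hij : i ≤ j) :
    part l j ≤ part l i :=
  getD_anti l hl _ _ (by omega)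

private lemma part_pos_iff (l : List ℕ) (hpos : ∀ x ∈ l, 0 < x) (i : ℕ) (hi : 1 ≤ i) :
    0 < part l i ↔ i ≤ l.length := by
  unfold part
  constructor
  · intro h
    by_contra hc
    rw [List.getD_eq_default l 0 (by omega)] at h
    omega
  · intro h
    rw [List.getD_eq_getElem l 0 (by omega)]
    exact hpos _ (l.getElem_mem (by omega))

private lemma part_le_sum (l : List ℕ) (i : ℕ) : part l i ≤ l.sum := by
  unfold part
  generalize i - 1 = j
  induction l generalizing j with
  | nil => simp
  | cons a l ih =>
    cases j with
    | zero => simp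
    | succ j =>
      simp only [List.getD_cons_succ, List.sum_cons]
      exact le_trans (ih j) (by omega)

private lemma filter_getD_eq (l : List ℕ) (hpos : ∀ x ∈ l, 0 < x) :
    ∀ N : ℕ, l.length ≤ N →
    ((List.range N).map (fun j => l.getD j 0)).filter (fun x => decide (0 < x)) = l := by
  induction l with
  | nil =>
    intro N _
    apply List.filter_eq_nil_iff.2
    intro a ha
    obtain ⟨j, _, rfl⟩ := List.mem_map.1 ha
    simp
  | cons a l ih =>
    intro N hN
    cases N with
    | zero => simp at hN
    | succ N =>
      rw [List.range_succ_eq_map, List.map_cons, List.map_map]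
      have h1 : (List.getD (a :: l) · 0) ∘ Nat.succ = fun j => l.getD j 0 := by
        funext j; simp
      have hpa : 0 < a := hpos a List.mem_cons_self
      rw [List.getD_cons_zero, h1, List.filter_cons_of_pos (by simpa using hpa),
        ih (fun x hx => hpos x (List.mem_cons_of_mem a hx)) N (by simpa using hN)]

noncomputable def decD (m : ℕ) (l : List ℕ) : D :=
  ⟨sD m l, tD m l, l.length - sD m l - tD m l,
   fun i => part l (i + 1) - (sD m l - m),
   fun i => part l (sD m l + i + 1) - (tD m l - m),
   fun i => part l (sD m l + tD m l + i + 1)⟩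

private lemma decode_spec (m : ℕ) (l : List ℕ) (hl : IsPartition l) (hRR : m = 0 → ¬ IsRR l) :
    ValidD m (decD m l) ∧ encodeD m (decD m l) = l := by
  obtain ⟨hsort, hpos⟩ := hl
  -- facts about s
  set S : Set ℕ := {h : ℕ | max m 1 ≤ h ∧ h - m ≤ part l h} with hS
  have hSbdd : BddAbove S := by
    refine ⟨m + l.sum, fun h hh => ?_⟩
    obtain ⟨h1, h2⟩ := hh
    have := part_le_sum l h
    omega
  have hSne : S.Nonempty := by
    rcases Nat.eq_zero_or_pos m with hm0 | hm1
    · subst hm0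
      have hlne : l ≠ [] := by
        intro h0
        exact hRR rfl (by intro x hx; rw [h0] at hx; simp at hx)
      refine ⟨1, by simp, ?_⟩
      have h1 : 0 < part l 1 := by
        rw [part_pos_iff l hpos 1 le_rfl]
        exact List.length_pos_iff.2 hlne
      omega
    · exact ⟨m, by simp; omega, by simp⟩
  have hsd : sD m l = sSup S := rfl
  have hsmem : sD m l ∈ S := by rw [hsd]; exact Nat.sSup_mem hSne hSbdd
  have hsub : ∀ h ∈ S, h ≤ sD m l := fun h hh => by rw [hsd]; exact le_csSup hSbdd hh
  have hs1 : max m 1 ≤ sD m l := hsmem.1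
  have hs2 : sD m l - m ≤ part l (sD m l) := hsmem.2
  have hs3 : part l (sD m l + 1) + m ≤ sD m l := by
    have hnot : sD m l + 1 ∉ S := by
      intro hmem
      have := hsub _ hmem
      omega
    rw [hS] at hnot
    simp only [Set.mem_setOf_eq, not_and] at hnot
    have := hnot (by omega)
    omega
  -- facts about t
  set T : Set ℕ := {h : ℕ | max m 1 ≤ h ∧ h - m ≤ part l (sD m l + h)} with hT
  have hTbdd : BddAbove T := by
    refine ⟨m + l.sum, fun h hh => ?_⟩
    obtain ⟨h1, h2⟩ := hh
    have := part_le_sum l (sD m l + h)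
    omega
  have hTne : T.Nonempty := by
    rcases Nat.eq_zero_or_pos m with hm0 | hm1
    · subst hm0
      refine ⟨1, by simp, ?_⟩
      have hlen : sD 0 l + 1 ≤ l.length := by
        by_contra hc
        push_neg at hc
        apply hRR rfl
        intro x hx
        obtain ⟨i, hi, rfl⟩ := List.mem_iff_getElem.1 hx
        have e1 : l[i] = part l (i + 1) := by
          unfold part
          rw [List.getD_eq_getElem l 0 (by omega)]
          simp
        rw [e1]
        calc l.length ≤ sD 0 l := by omega
        _ ≤ part l (sD 0 l) := by simpa using hs2
        _ ≤ part l (i + 1) := part_anti l hsort (by omega)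
      have h1 : 0 < part l (sD 0 l + 1) := by
        rw [part_pos_iff l hpos _ (by omega)]
        exact hlen
      omega
    · exact ⟨m, by simp; omega, by simp⟩
  have htd : tD m l = sSup T := rfl
  have htmem : tD m l ∈ T := by rw [htd]; exact Nat.sSup_mem hTne hTbdd
  have htsub : ∀ h ∈ T, h ≤ tD m l := fun h hh => by rw [htd]; exact le_csSup hTbdd hh
  have ht1 : max m 1 ≤ tD m l := htmem.1
  have ht2 : tD m l - m ≤ part l (sD m l + tD m l) := htmem.2
  have ht3 : part l (sD m l + tD m l + 1) + m ≤ tD m l := by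
    have hnot : tD m l + 1 ∉ T := by
      intro hmem
      have := htsub _ hmem
      omega
    rw [hT] at hnot
    simp only [Set.mem_setOf_eq, not_and] at hnot
    have := hnot (by omega)
    have e : sD m l + (tD m l + 1) = sD m l + tD m l + 1 := by ring
    rw [e] at this
    omega
  have hts : tD m l ≤ sD m l := by
    by_contra hc
    push_neg at hc
    have : tD m l ∈ S := by
      refine ⟨by omega, ?_⟩
      calc tD m l - m ≤ part l (sD m l + tD m l) := ht2
      _ ≤ part l (tD m l) := part_anti l hsort (by omega)
    have := hsub _ this
    omega
  have hmt : m ≤ tD m l := le_trans (le_max_left m 1) ht1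
  have h1t : 1 ≤ tD m l := le_trans (le_max_right m 1) ht1
  have hv : ValidD m (decD m l) := by
    constructor
    · exact ht1
    · exact hts
    · intro i j hij
      exact Nat.sub_le_sub_right (part_anti l hsort (by omega)) _
    · intro i hi
      simp only [decD] at hi ⊢
      have h1 : part l (i + 1) ≤ part l (sD m l + 1) := part_anti l hsort (by omega)
      omega
    · intro i j hij
      exact Nat.sub_le_sub_right (part_anti l hsort (by omega)) _
    · intro i hi
      simp only [decD] at hi ⊢
      have h1 : part l (sD m l + i + 1) ≤ part l (sD m l + tD m l + 1) :=
        part_anti l hsort (by omega)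
      omega
    · simp only [decD]
      have e : sD m l + 0 + 1 = sD m l + 1 := by ring
      rw [e]
      omega
    · intro i j hij
      exact part_anti l hsort (by omega)
    · intro i hi
      simp only [decD] at hi ⊢
      rw [part_pos_iff l hpos _ (by omega)]
      omega
    · intro i hi
      simp only [decD] at hi ⊢
      have := (part_pos_iff l hpos (sD m l + tD m l + i + 1) (by omega))
      omega
    · simp only [decD]
      have e : sD m l + tD m l + 0 + 1 = sD m l + tD m l + 1 := by ring
      rw [e]
      omega
  refine ⟨hv, ?_⟩
  unfold encodeD
  have hR : ∀ j ∈ List.range ((decD m l).s + (decD m l).t + (decD m l).k),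
      Rfun m (decD m l) j = l.getD j 0 := by
    intro j _
    unfold Rfun
    simp only [decD]
    by_cases h1 : j < sD m l
    · simp only [h1, ↓reduceIte]
      have h2 : part l (sD m l) ≤ part l (j + 1) := part_anti l hsort (by omega)
      have h3 : part l (j + 1) = l.getD j 0 := by unfold part; simp
      omega
    · by_cases h2 : j < sD m l + tD m l
      · simp only [h1, h2, ↓reduceIte]
        have h3 : part l (sD m l + tD m l) ≤ part l (sD m l + (j - sD m l) + 1) :=
          part_anti l hsort (by omega)
        have h4 : part l (sD m l + (j - sD m l) + 1) = l.getD j 0 := by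
          unfold part
          congr 1
          omega
        omega
      · simp only [h1, h2, ↓reduceIte]
        have h4 : part l (sD m l + tD m l + (j - sD m l - tD m l) + 1) = l.getD j 0 := by
          unfold part
          congr 1
          omega
        exact h4
  rw [List.map_congr_left hR]
  apply filter_getD_eq l hpos
  simp only [decD]
  omega

private lemma encode_injOn (m : ℕ) : Set.InjOn (encodeD m) {d : D | ValidD m d} := by
  intro d hd d' hd' heq
  simp only [Set.mem_setOf_eq] at hd hd'
  have hs : d.s = d'.s := by rw [← encode_sD hd, ← encode_sD hd', heq]
  have ht : d.t = d'.t := by rw [← encode_tD hd, ← encode_tD hd', heq]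
  have hk : d.k = d'.k := by rw [← encode_gamma1 hd, ← encode_gamma1 hd', heq]
  have hal : d.al = d'.al := by
    funext i
    by_cases hi : i < d.s
    · have e1 := encode_part_al hd i hi
      have e2 := encode_part_al hd' i (by omega)
      rw [heq] at e1
      rw [e1] at e2
      omega
    · rw [hd.ha0 i (by omega), hd'.ha0 i (by omega)]
  have hbe : d.be = d'.be := by
    funext i
    by_cases hi : i < d.t
    · have e1 := encode_part_be hd i hi
      have e2 := encode_part_be hd' i (by omega)
      rw [heq, hs] at e1
      rw [e1] at e2
      omega
    · rw [hd.hb0 i (by omega), hd'.hb0 i (by omega)]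
  have hga : d.ga = d'.ga := by
    funext i
    have e1 := encode_part_ga hd i
    have e2 := encode_part_ga hd' i
    rw [heq, hs, ht] at e1
    rw [e1] at e2
    omega
  cases d; cases d'
  simp_all

private lemma set_eq (m n : ℕ) (P : ℤ → Prop) :
    {l : List ℕ | IsPartitionOf n l ∧ (m = 0 → ¬ IsRR l) ∧ P (rank2 m l)} =
      encodeD m '' {d : D | ValidD m d ∧ sumD m d = n ∧ P (rankD d)} := by
  ext l
  constructor
  · rintro ⟨⟨hl, hsum⟩, hRR, hP⟩
    obtain ⟨hv, henc⟩ := decode_spec m l hl hRR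
    refine ⟨decD m l, ⟨hv, ?_, ?_⟩, henc⟩
    · rw [← encode_sum hv, henc, hsum]
    · rw [← encode_rank2 hv, henc]; exact hP
  · rintro ⟨d, ⟨hv, hsum, hP⟩, rfl⟩
    exact ⟨⟨encode_isPartition hv, by rw [encode_sum hv, hsum]⟩,
      fun h0 => encode_not_RR hv h0, by rw [encode_rank2 hv]; exact hP⟩


/-! ### The maps φ and ψ -/

def phiD (r : ℕ) (d : D) : D :=
  let c := d.k - r
  let b := Nat.findGreatest (fun x => d.be 0 ≤ x ∧ d.al (d.s - d.t - x) + x ≤ c) (d.s - d.t)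
  let u := d.s - d.t - b
  { s := d.s + 1, t := d.t + 1,
    k := Nat.findGreatest (fun j => ∀ i, i < j → 2 ≤ d.ga i) d.k,
    al := fun i => if i < u then d.al i else if i = u then c - b else d.al (i - 1),
    be := fun i => if i = 0 then b else d.be (i - 1),
    ga := fun i => d.ga i - 1 }

def psiD (r : ℕ) (e : D) : D :=
  let u := e.s - e.t - e.be 0
  let c := e.be 0 + e.al u
  { s := e.s - 1, t := e.t - 1, k := c + r,
    al := fun i => if i < u then e.al i else e.al (i + 1),
    be := fun i => e.be (i + 1),
    ga := fun i => if i < c + r then e.ga i + 1 else 0 }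

private lemma anti_of_succ (f : ℕ → ℕ) (h : ∀ i, f (i + 1) ≤ f i) :
    ∀ i j, i ≤ j → f j ≤ f i := by
  intro i j hij
  induction j with
  | zero => have : i = 0 := by omega
            subst this; exact le_rfl
  | succ j ih =>
    rcases Nat.lt_or_ge i (j + 1) with h1 | h1
    · exact le_trans (h j) (ih (by omega))
    · have : i = j + 1 := by omega
      subst this; exact le_rfl

private lemma sum_insert_fun (f : ℕ → ℕ) (u v N : ℕ) (hu : u ≤ N) :
    ∑ i ∈ Finset.range (N + 1), (if i < u then f i else if i = u then v else f (i - 1))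
      = v + ∑ i ∈ Finset.range N, f i := by
  induction N with
  | zero =>
    have : u = 0 := by omega
    subst this; simp
  | succ N ih =>
    rw [Finset.sum_range_succ]
    by_cases hu' : u ≤ N
    · rw [ih hu', if_neg (by omega), if_neg (by omega), Finset.sum_range_succ]
      have e1 : N + 1 - 1 = N := by omega
      rw [e1]; ring
    · have huN : u = N + 1 := by omega
      subst huN
      rw [if_neg (by omega), if_pos rfl,
        Finset.sum_congr rfl (fun i hi => if_pos (Finset.mem_range.1 hi))]
      ring

private lemma sum_sub_one (g : ℕ → ℕ) (k : ℕ) (h : ∀ i, i < k → 1 ≤ g i) :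
    (∑ i ∈ Finset.range k, (g i - 1)) + k = ∑ i ∈ Finset.range k, g i := by
  induction k with
  | zero => simp
  | succ k ih =>
    rw [Finset.sum_range_succ, Finset.sum_range_succ]
    have h1 := h k (by omega)
    have h2 := ih (fun i hi => h i (by omega))
    omega

private lemma rect_step (s m : ℕ) (h : m + 1 ≤ s) :
    (s + 1) * (s + 1 - (m + 2)) + (m + 1) = s * (s - m) := by
  obtain ⟨w, rfl⟩ : ∃ w, s = m + 1 + w := ⟨s - (m + 1), by omega⟩
  have e1 : m + 1 + w + 1 - (m + 2) = w := by omega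
  have e2 : m + 1 + w - m = w + 1 := by omega
  rw [e1, e2]; ring

private lemma phi_forward {m r : ℕ} {d : D} (v : ValidD m d) (hmr : 0 < m → 0 < r)
    (hrnk : rankD d ≤ -(r : ℤ)) :
    ValidD (m + 2) (phiD r d) ∧
      (sumD (m + 2) (phiD r d) : ℤ) = (sumD m d : ℤ) - r - 2 * m - 2 ∧
      -(r : ℤ) ≤ rankD (phiD r d) ∧ psiD r (phiD r d) = d := by
  have hmt := hm_le_t v
  have h1t := h1_le_t v
  have hts := v.hts
  have hb1 := v.hb1
  have hg1 := v.hg1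
  have hrk : d.be 0 + d.al (d.s - d.t - d.be 0) + r ≤ d.k := by
    simp only [rankD] at hrnk; omega
  have htm1 : m + 1 ≤ d.t := by
    rcases Nat.eq_zero_or_pos m with rfl | hm
    · omega
    · have hr1 : 0 < r := hmr hm
      have := v.hgpos 0 (by omega)
      omega
  have hsm1 : m + 1 ≤ d.s := by omega
  set c := d.k - r with hc
  set b := Nat.findGreatest (fun x => d.be 0 ≤ x ∧ d.al (d.s - d.t - x) + x ≤ c)
    (d.s - d.t) with hbdef
  set u := d.s - d.t - b with hu
  set k' := Nat.findGreatest (fun j => ∀ i, i < j → 2 ≤ d.ga i) d.k with hk'def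
  have hPbe : d.be 0 ≤ d.be 0 ∧ d.al (d.s - d.t - d.be 0) + d.be 0 ≤ c := ⟨le_rfl, by omega⟩
  have hble : d.be 0 ≤ b :=
    Nat.le_findGreatest (show d.be 0 ≤ d.s - d.t by omega) hPbe
  have hbub : b ≤ d.s - d.t := Nat.findGreatest_le _
  have hPb : d.be 0 ≤ b ∧ d.al u + b ≤ c :=
    Nat.findGreatest_spec (P := fun x => d.be 0 ≤ x ∧ d.al (d.s - d.t - x) + x ≤ c)
      (n := d.s - d.t) (m := d.be 0) (show d.be 0 ≤ d.s - d.t by omega) hPbe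
  have hbc : b ≤ c := by omega
  have hugt : b < d.s - d.t → c < d.al (d.s - d.t - (b + 1)) + (b + 1) := by
    intro hblt
    have h2 := Nat.findGreatest_is_greatest (P := fun x => d.be 0 ≤ x ∧
        d.al (d.s - d.t - x) + x ≤ c) (n := d.s - d.t)
      (show b < b + 1 by omega) (show b + 1 ≤ d.s - d.t by omega)
    by_contra hcon
    push_neg at hcon
    exact h2 ⟨by omega, hcon⟩
  have hins_le : d.al u ≤ c - b := by omega
  have hins_ge : 1 ≤ u → c - b ≤ d.al (u - 1) := by
    intro h1u
    have hblt : b < d.s - d.t := by omega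
    have h2 := hugt hblt
    have e : d.s - d.t - (b + 1) = u - 1 := by omega
    rw [e] at h2
    omega
  have hk'le : k' ≤ d.k := Nat.findGreatest_le _
  have hQk' : ∀ i, i < k' → 2 ≤ d.ga i :=
    Nat.findGreatest_spec (P := fun j => ∀ i, i < j → 2 ≤ d.ga i) (n := d.k) (m := 0)
      (Nat.zero_le _) (fun i hi => absurd hi (Nat.not_lt_zero i))
  have hk'up : ∀ i, k' ≤ i → d.ga i ≤ 1 := by
    intro i hi
    by_cases hik : d.k ≤ i
    · rw [v.hg0 i hik]; omega
    · have hnQ := Nat.findGreatest_is_greatest (show k' < k' + 1 by omega)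
        (show k' + 1 ≤ d.k by omega)
      by_contra hcon
      push_neg at hcon
      apply hnQ
      intro i0 hi0
      have := v.hg i0 i (by omega)
      omega
  have hphi : phiD r d =
      { s := d.s + 1, t := d.t + 1, k := k',
        al := fun i => if i < u then d.al i else if i = u then c - b else d.al (i - 1),
        be := fun i => if i = 0 then b else d.be (i - 1),
        ga := fun i => d.ga i - 1 } := rfl
  have halsucc : ∀ i, (fun i => if i < u then d.al i else if i = u then c - b
      else d.al (i - 1)) (i + 1) ≤ (fun i => if i < u then d.al i else if i = u then c - b
      else d.al (i - 1)) i := by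
    intro i
    dsimp only
    by_cases h1 : i + 1 < u
    · rw [if_pos h1, if_pos (by omega)]
      exact v.ha _ _ (by omega)
    · by_cases h2 : i + 1 = u
      · rw [if_neg h1, if_pos h2, if_pos (by omega)]
        have := hins_ge (by omega)
        have e : u - 1 = i := by omega
        rw [e] at this
        exact this
      · by_cases h3 : i = u
        · rw [if_neg h1, if_neg h2, if_neg (by omega), if_pos h3]
          have e : i + 1 - 1 = u := by omega
          rw [e]
          exact hins_le
        · by_cases h4 : i < u
          · omega
          · rw [if_neg h1, if_neg h2, if_neg h4, if_neg h3]
            exact v.ha _ _ (by omega)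
  have hvphi : ValidD (m + 2) (phiD r d) := by
    rw [hphi]
    constructor
    case ht => simp only; omega
    case hts => simp only; omega
    case ha => exact anti_of_succ _ halsucc
    case ha0 =>
      intro i hi
      simp only at hi ⊢
      rw [if_neg (by omega), if_neg (by omega)]
      exact v.ha0 _ (by omega)
    case hb =>
      apply anti_of_succ
      intro i
      dsimp only
      rw [if_neg (by omega)]
      by_cases h1 : i = 0
      · rw [if_pos h1]
        subst h1
        simpa using hble
      · rw [if_neg h1]
        exact v.hb _ _ (by omega)
    case hb0 =>
      intro i hi
      simp only at hi ⊢
      rw [if_neg (by omega)]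
      exact v.hb0 _ (by omega)
    case hb1 =>
      dsimp only
      rw [show (if (0:ℕ) = 0 then b else d.be (0 - 1)) = b from rfl]
      omega
    case hg =>
      intro i j hij
      simp only
      have := v.hg i j hij
      omega
    case hgpos =>
      intro i hi
      simp only at hi ⊢
      have := hQk' i hi
      omega
    case hg0 =>
      intro i hi
      simp only at hi ⊢
      have := hk'up i hi
      omega
    case hg1 =>
      simp only
      omega
  have halsum : ∑ i ∈ Finset.range (d.s + 1),
      (if i < u then d.al i else if i = u then c - b else d.al (i - 1))
        = (c - b) + ∑ i ∈ Finset.range d.s, d.al i :=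
    sum_insert_fun _ _ _ _ (by omega)
  have hbesum : ∑ i ∈ Finset.range (d.t + 1),
      (if i = 0 then b else d.be (i - 1)) = b + ∑ i ∈ Finset.range d.t, d.be i := by
    rw [Finset.sum_range_succ']
    rw [show (if (0:ℕ) = 0 then b else d.be (0 - 1)) = b from rfl,
      Finset.sum_congr rfl (fun i _ => if_neg (Nat.succ_ne_zero i))]
    simp only [Nat.add_sub_cancel]
    ring
  have hgasum : (∑ i ∈ Finset.range k', (d.ga i - 1)) + d.k = ∑ i ∈ Finset.range d.k, d.ga i := by
    have hsub : ∑ i ∈ Finset.range k', (d.ga i - 1) = ∑ i ∈ Finset.range d.k, (d.ga i - 1) := by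
      apply Finset.sum_subset (Finset.range_subset_range.2 hk'le)
      intro i _ hi
      have := hk'up i (by simpa using hi)
      omega
    rw [hsub]
    exact sum_sub_one _ _ (fun i hi => v.hgpos i hi)
  have hrect1 := rect_step d.s m hsm1
  have hrect2 := rect_step d.t m htm1
  have hsum : (sumD (m + 2) (phiD r d) : ℤ) = (sumD m d : ℤ) - r - 2 * m - 2 := by
    rw [hphi]
    simp only [sumD]
    rw [halsum, hbesum]
    push_cast [← hgasum, ← hrect1, ← hrect2]
    omega
  have hrank : -(r : ℤ) ≤ rankD (phiD r d) := by
    rw [hphi]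
    simp only [rankD]
    rw [show (if True then b else d.be (0 - 1)) = b from rfl]
    have e : d.s + 1 - (d.t + 1) - b = u := by omega
    rw [e, if_neg (lt_irrefl u), if_pos rfl]
    omega
  refine ⟨hvphi, hsum, hrank, ?_⟩
  have hpsi : ∀ (E : D), psiD r E =
      { s := E.s - 1, t := E.t - 1,
        k := E.be 0 + E.al (E.s - E.t - E.be 0) + r,
        al := fun i => if i < E.s - E.t - E.be 0 then E.al i else E.al (i + 1),
        be := fun i => E.be (i + 1),
        ga := fun i => if i < E.be 0 + E.al (E.s - E.t - E.be 0) + r then E.ga i + 1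
          else 0 } := fun E => rfl
  rw [hphi, hpsi]
  dsimp only
  simp only [show (if True then b else d.be (0 - 1)) = b from rfl]
  have e1 : d.s + 1 - (d.t + 1) - b = u := by omega
  rw [e1, if_neg (lt_irrefl u), if_pos rfl]
  have he : b + (c - b) + r = d.k := by omega
  rw [he]
  ext
  case s => dsimp only; omega
  case t => dsimp only; omega
  case k => rfl
  case al =>
    rename_i i
    dsimp only
    by_cases h1 : i < u
    · rw [if_pos h1, if_pos h1]
    · rw [if_neg h1, if_neg (show ¬ i + 1 < u by omega), if_neg (show ¬ i + 1 = u by omega)]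
      congr 1
  case be =>
    rename_i i
    dsimp only
    rw [if_neg (Nat.succ_ne_zero i)]
    congr 1
  case ga =>
    rename_i i
    dsimp only
    by_cases h1 : i < d.k
    · rw [if_pos h1]
      have := v.hgpos i h1
      omega
    · rw [if_neg h1]
      have := v.hg0 i (by omega)
      omega


private lemma psi_backward {m r : ℕ} {e : D} (v : ValidD (m + 2) e)
    (hrnk : -(r : ℤ) ≤ rankD e) :
    ValidD m (psiD r e) ∧ rankD (psiD r e) ≤ -(r : ℤ) ∧ phiD r (psiD r e) = e := by
  have h2t : m + 2 ≤ e.t := by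
    have := v.ht; omega
  have hts := v.hts
  have hb1 := v.hb1
  have hg1 := v.hg1
  simp only [rankD] at hrnk
  have hrk0 : e.k ≤ e.be 0 + e.al (e.s - e.t - e.be 0) + r := by omega
  set u := e.s - e.t - e.be 0 with hudef
  set a := e.al u with hadef
  set c := e.be 0 + a with hcdef
  have hrk : e.k ≤ c + r := hrk0
  have hpsi : psiD r e =
      { s := e.s - 1, t := e.t - 1, k := c + r,
        al := fun i => if i < u then e.al i else e.al (i + 1),
        be := fun i => e.be (i + 1),
        ga := fun i => if i < c + r then e.ga i + 1 else 0 } := rfl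
  have hvpsi : ValidD m (psiD r e) := by
    rw [hpsi]
    constructor
    case ht => simp only; omega
    case hts => simp only; omega
    case ha =>
      intro i j hij
      simp only
      split_ifs <;> exact v.ha _ _ (by omega)
    case ha0 =>
      intro i hi
      simp only at hi ⊢
      rw [if_neg (show ¬ i < u by omega)]
      exact v.ha0 _ (by omega)
    case hb =>
      intro i j hij
      simp only
      exact v.hb _ _ (by omega)
    case hb0 =>
      intro i hi
      simp only at hi ⊢
      exact v.hb0 _ (by omega)
    case hb1 =>
      simp only [Nat.zero_add]
      have := v.hb 0 1 (by omega)
      omega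
    case hg =>
      intro i j hij
      simp only
      have := v.hg i j hij
      split_ifs <;> omega
    case hgpos =>
      intro i hi
      simp only at hi ⊢
      rw [if_pos hi]
      omega
    case hg0 =>
      intro i hi
      simp only at hi ⊢
      rw [if_neg (by omega)]
    case hg1 =>
      simp only
      split_ifs <;> omega
  have hrank : rankD (psiD r e) ≤ -(r : ℤ) := by
    rw [hpsi]
    simp only [rankD, Nat.zero_add]
    have hb10 : e.be 1 ≤ e.be 0 := v.hb 0 1 (by omega)
    set j := e.s - 1 - (e.t - 1) - e.be 1 with hjdef
    have hju : u ≤ j := by omega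
    rw [if_neg (show ¬ j < u by omega)]
    have hle : e.al (j + 1) ≤ a := v.ha u (j + 1) (by omega)
    omega
  refine ⟨hvpsi, hrank, ?_⟩
  -- compute the b chosen by phi on (psiD r e)
  have hcc : (c + r) - r = c := by omega
  have hbeq : Nat.findGreatest (fun x => e.be 1 ≤ x ∧
      (if e.s - 1 - (e.t - 1) - x < u then e.al (e.s - 1 - (e.t - 1) - x)
        else e.al (e.s - 1 - (e.t - 1) - x + 1)) + x ≤ c) (e.s - 1 - (e.t - 1)) = e.be 0 := by
    apply Nat.findGreatest_eq_iff.2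
    refine ⟨by omega, fun _ => ⟨v.hb 0 1 (by omega), ?_⟩, fun x hx1 hx2 => ?_⟩
    · have ej : e.s - 1 - (e.t - 1) - e.be 0 = u := by omega
      rw [ej, if_neg (lt_irrefl u)]
      have : e.al (u + 1) ≤ a := v.ha u (u + 1) (by omega)
      omega
    · intro ⟨hx3, hx4⟩
      have hj : e.s - 1 - (e.t - 1) - x < u := by omega
      rw [if_pos hj] at hx4
      have : a ≤ e.al (e.s - 1 - (e.t - 1) - x) := v.ha _ u (by omega)
      omega
  have hkeq : Nat.findGreatest (fun j => ∀ i, i < j → 2 ≤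
      (if i < c + r then e.ga i + 1 else 0)) (c + r) = e.k := by
    apply Nat.findGreatest_eq_iff.2
    refine ⟨hrk, fun _ i hi => ?_, fun x hx1 hx2 hQ => ?_⟩
    · rw [if_pos (by omega)]
      have := v.hgpos i hi
      omega
    · have := hQ e.k (by omega)
      rw [if_pos (by omega), v.hg0 e.k le_rfl] at this
      omega
  have hphi : ∀ (E : D), phiD r E =
      { s := E.s + 1, t := E.t + 1,
        k := Nat.findGreatest (fun j => ∀ i, i < j → 2 ≤ E.ga i) E.k,
        al := fun i =>
          if i < E.s - E.t - Nat.findGreatest (fun x => E.be 0 ≤ x ∧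
              E.al (E.s - E.t - x) + x ≤ E.k - r) (E.s - E.t) then E.al i
          else if i = E.s - E.t - Nat.findGreatest (fun x => E.be 0 ≤ x ∧
              E.al (E.s - E.t - x) + x ≤ E.k - r) (E.s - E.t) then
            (E.k - r) - Nat.findGreatest (fun x => E.be 0 ≤ x ∧
              E.al (E.s - E.t - x) + x ≤ E.k - r) (E.s - E.t)
          else E.al (i - 1),
        be := fun i => if i = 0 then Nat.findGreatest (fun x => E.be 0 ≤ x ∧
            E.al (E.s - E.t - x) + x ≤ E.k - r) (E.s - E.t) else E.be (i - 1),
        ga := fun i => E.ga i - 1 } := fun E => rfl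
  rw [hpsi, hphi]
  dsimp only
  simp only [Nat.zero_add]
  rw [hcc, hbeq, hkeq]
  have eu : e.s - 1 - (e.t - 1) - e.be 0 = u := by omega
  rw [eu]
  ext
  case s => dsimp only; omega
  case t => dsimp only; omega
  case k => rfl
  case al =>
    rename_i i
    dsimp only
    by_cases h1 : i < u
    · rw [if_pos h1, if_pos h1]
    · by_cases h2 : i = u
      · rw [if_neg h1, if_pos h2]
        subst h2
        omega
      · rw [if_neg h1, if_neg h2, if_neg (show ¬ i - 1 < u by omega)]
        congr 1
        omega
  case be =>
    rename_i i
    dsimp only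
    by_cases h1 : i = 0
    · rw [if_pos h1]; subst h1; rfl
    · rw [if_neg h1]
      congr 1
      omega
  case ga =>
    rename_i i
    dsimp only
    by_cases h1 : i < c + r
    · rw [if_pos h1]
      omega
    · rw [if_neg h1]
      have := v.hg0 i (by omega)
      omega


private lemma sum_lower {m r : ℕ} {d : D} (v : ValidD m d) (hmr : 0 < m → 0 < r)
    (hrnk : rankD d ≤ -(r : ℤ)) : r + 2 * m + 2 ≤ sumD m d := by
  have hmt := hm_le_t v
  have h1t := h1_le_t v
  have hts := v.hts
  have hg1 := v.hg1
  have hrk : d.be 0 + d.al (d.s - d.t - d.be 0) + r ≤ d.k := by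
    simp only [rankD] at hrnk; omega
  have htm1 : m + 1 ≤ d.t := by
    rcases Nat.eq_zero_or_pos m with rfl | hm
    · omega
    · have hr1 : 0 < r := hmr hm
      have := v.hgpos 0 (by omega)
      omega
  have h1 : m + 1 ≤ d.s * (d.s - m) := by
    calc m + 1 = (m + 1) * 1 := by ring
    _ ≤ d.s * (d.s - m) := Nat.mul_le_mul (by omega) (by omega)
  have h2 : m + 1 ≤ d.t * (d.t - m) := by
    calc m + 1 = (m + 1) * 1 := by ring
    _ ≤ d.t * (d.t - m) := Nat.mul_le_mul (by omega) (by omega)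
  have h3 : d.k ≤ ∑ i ∈ Finset.range d.k, d.ga i := by
    calc d.k = ∑ _i ∈ Finset.range d.k, 1 := by simp
    _ ≤ ∑ i ∈ Finset.range d.k, d.ga i :=
      Finset.sum_le_sum (fun i hi => v.hgpos i (Finset.mem_range.1 hi))
  unfold sumD
  omega

/-- **Second symmetry.** For integers `m ≥ 0`, `r` with either `m > 0` and
`r > 0`, or `m = 0` and `r ≥ 0`, and every `n ≥ 1`,
`h(n,m,≤-r) = h(n-r-2m-2, m+2, ≥-r)`, where `h(k,·,·) = 0` for `k < 0`. -/
theorem second_symmetry (m r : ℕ) (hmr : 0 < m → 0 < r) (n : ℕ) (hn : 1 ≤ n) :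
    hC n m (fun x => x ≤ -(r : ℤ)) =
      hCZ ((n : ℤ) - r - 2 * m - 2) (m + 2) (fun x => -(r : ℤ) ≤ x) := by
  by_cases hN : 0 ≤ (n : ℤ) - r - 2 * m - 2
  · simp only [hCZ, if_pos hN]
    set n' := ((n : ℤ) - r - 2 * m - 2).toNat with hn'
    have hn'e : (n' : ℤ) = (n : ℤ) - r - 2 * m - 2 := Int.toNat_of_nonneg hN
    unfold hC
    rw [set_eq m n (fun x => x ≤ -(r : ℤ)), set_eq (m + 2) n' (fun x => -(r : ℤ) ≤ x)]
    rw [Set.ncard_image_of_injOn ((encode_injOn m).mono (fun d hd => hd.1)),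
      Set.ncard_image_of_injOn ((encode_injOn (m + 2)).mono (fun d hd => hd.1))]
    have himg : phiD r '' {d : D | ValidD m d ∧ sumD m d = n ∧ rankD d ≤ -(r : ℤ)} =
        {e : D | ValidD (m + 2) e ∧ sumD (m + 2) e = n' ∧ -(r : ℤ) ≤ rankD e} := by
      ext e1
      constructor
      · rintro ⟨d, ⟨hv, hsum, hr⟩, rfl⟩
        obtain ⟨hv2, hsum2, hr2, _⟩ := phi_forward hv hmr hr
        refine ⟨hv2, ?_, hr2⟩
        have he : (sumD (m + 2) (phiD r d) : ℤ) = (n' : ℤ) := by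
          rw [hsum2, hsum, hn'e]
        exact_mod_cast he
      · rintro ⟨hv2, hsum2, hr2⟩
        obtain ⟨hv1, hr1, hinv⟩ := psi_backward hv2 hr2
        refine ⟨psiD r e1, ⟨hv1, ?_, hr1⟩, hinv⟩
        obtain ⟨_, hsumf, _, _⟩ := phi_forward hv1 hmr hr1
        rw [hinv] at hsumf
        have he : (sumD m (psiD r e1) : ℤ) = (n : ℤ) := by
          rw [hsum2] at hsumf
          omega
        exact_mod_cast he
    have hinj : Set.InjOn (phiD r)
        {d : D | ValidD m d ∧ sumD m d = n ∧ rankD d ≤ -(r : ℤ)} := by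
      intro d1 h1 d2 h2 heq
      obtain ⟨_, _, _, hi1⟩ := phi_forward h1.1 hmr h1.2.2
      obtain ⟨_, _, _, hi2⟩ := phi_forward h2.1 hmr h2.2.2
      rw [← hi1, ← hi2, heq]
    rw [← himg, Set.ncard_image_of_injOn hinj]
  · simp only [hCZ, if_neg hN]
    unfold hC
    rw [set_eq m n (fun x => x ≤ -(r : ℤ))]
    have hempty : {d : D | ValidD m d ∧ sumD m d = n ∧ (fun x => x ≤ -(r : ℤ)) (rankD d)} = ∅ := by
      ext d
      simp only [Set.mem_setOf_eq, Set.mem_empty_iff_false, iff_false]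
      rintro ⟨hv, hsum, hrk⟩
      have := sum_lower hv hmr hrk
      omega
    rw [hempty]
    simp

end RR
end
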